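/- arXiv:2402.00315 — 4 statements merged into one kernel-verified Lean document; each statement's English description precedes it below -/
import Mathlib

section
/- Let K ≥ 2 and T ≥ 1 be integers and let v_1,...,v_T ∈ [0,1]^K be an arbitrary sequence of loss vectors. Define weights by w^1_j = 1 for all j ∈ [K], w^{t+1}_j = w^t_j · e^{−η v_{t,j}} with learning rate η = √(2 log K / T), and normalized weights w̃^t_j = w^t_j / ∑_{i=1}^K w^t_i. Then the regret of the weighted majority (exponential weights) algorithm satisfies ∑_{t=1}^T ∑_{j=1}^K w̃^t_j · v_{t,j} − min_{i∈[K]} ∑_{t=1}^T v_{t,i} ≤ √(2 T log K). -/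
/-!
The potential `Φ t = log ∑ j, w t j` drops in each round by at least `η` times the learner's
expected loss minus `η ^ 2 / 2` (from `exp (-x) ≤ 1 - x + x ^ 2 / 2` and `1 + y ≤ exp y`), while
`Φ 0 = log K` and `Φ T ≥ log (w T i) = -η ∑ t, v t i` for every expert `i`. Hence the regret is
at most `log K / η + η T / 2`, and the chosen `η` balances the two terms at `√(2 T log K)`.
-/

open Real Finset Set

lemma Real.exp_neg_le_one_sub_add_sq_div_two {x : ℝ} (hx : 0 ≤ x) :
    exp (-x) ≤ 1 - x + x ^ 2 / 2 := by
  have hderiv (z : ℝ) :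
      HasDerivAt (fun z ↦ 1 - z + z ^ 2 / 2 - exp (-z)) (-1 + z + exp (-z)) z := by
    refine ((((hasDerivAt_id z).const_sub 1).add ((hasDerivAt_pow 2 z).div_const 2)).sub
      (hasDerivAt_neg z).exp).congr_deriv ?_
    norm_num
  have hmono := monotone_of_hasDerivAt_nonneg hderiv fun z ↦ by
    show 0 ≤ -1 + z + exp (-z)
    linarith [add_one_le_exp (-z)]
  simpa using hmono hx

lemma Real.exp_neg_mul_le {η x : ℝ} (hη : 0 ≤ η) (hx : x ∈ Icc (0 : ℝ) 1) :
    exp (-η * x) ≤ 1 - η * x + η ^ 2 / 2 := by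
  have hsq : (η * x) ^ 2 ≤ η ^ 2 := by
    rw [mul_pow]; exact mul_le_of_le_one_right (sq_nonneg η) (pow_le_one₀ hx.1 hx.2)
  calc exp (-η * x) = exp (-(η * x)) := by rw [neg_mul]
    _ ≤ 1 - η * x + (η * x) ^ 2 / 2 :=
      exp_neg_le_one_sub_add_sq_div_two (mul_nonneg hη hx.1)
    _ ≤ 1 - η * x + η ^ 2 / 2 := by linarith

lemma Fin.sum_univ_succ_sub {M : Type*} [AddCommGroup M] (f : ℕ → M) (n : ℕ) :
    ∑ t : Fin n, (f (t + 1) - f t) = f n - f 0 := by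
  rw [Fin.sum_univ_eq_sum_range (fun t ↦ f (t + 1) - f t), sum_range_sub]

section ExponentialWeights

variable {ι : Type*} {η : ℝ}

lemma sum_mul_exp_neg_mul_le_exp [Fintype ι] {p ℓ : ι → ℝ} (hp : ∀ j, 0 ≤ p j)
    (hp1 : ∑ j, p j = 1) (hℓ : ∀ j, ℓ j ∈ Icc (0 : ℝ) 1) (hη : 0 ≤ η) :
    ∑ j, p j * exp (-η * ℓ j) ≤ exp (-η * ∑ j, p j * ℓ j + η ^ 2 / 2) :=
  calc ∑ j, p j * exp (-η * ℓ j) ≤ ∑ j, p j * (1 - η * ℓ j + η ^ 2 / 2) :=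
        sum_le_sum fun j _ ↦ mul_le_mul_of_nonneg_left (exp_neg_mul_le hη (hℓ j)) (hp j)
    _ = -η * ∑ j, p j * ℓ j + η ^ 2 / 2 + 1 := by
        simp only [mul_add, mul_sub, mul_one, sum_add_distrib, sum_sub_distrib, ← sum_mul, hp1,
          mul_left_comm _ η, ← mul_sum]
        ring
    _ ≤ exp (-η * ∑ j, p j * ℓ j + η ^ 2 / 2) := add_one_le_exp _

lemma log_sum_mul_exp_neg_mul_le [Fintype ι] [Nonempty ι] {w ℓ : ι → ℝ} (hw : ∀ j, 0 < w j)
    (hℓ : ∀ j, ℓ j ∈ Icc (0 : ℝ) 1) (hη : 0 ≤ η) :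
    log (∑ j, w j * exp (-η * ℓ j))
      ≤ log (∑ j, w j) - η * ∑ j, (w j / ∑ i, w i) * ℓ j + η ^ 2 / 2 := by
  set S := ∑ i, w i
  have hS : 0 < S := sum_pos (fun j _ ↦ hw j) univ_nonempty
  have hscale : ∑ j, w j * exp (-η * ℓ j) = S * ∑ j, (w j / S) * exp (-η * ℓ j) := by
    rw [mul_sum]; congr! 1 with j; field_simp
  have hp1 : ∑ j, w j / S = 1 := by rw [← sum_div, div_self hS.ne']
  calc log (∑ j, w j * exp (-η * ℓ j))
      ≤ log (S * exp (-η * ∑ j, (w j / S) * ℓ j + η ^ 2 / 2)) := by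
        refine log_le_log (sum_pos (fun j _ ↦ mul_pos (hw j) (exp_pos _)) univ_nonempty) ?_
        rw [hscale]
        refine mul_le_mul_of_nonneg_left ?_ hS.le
        exact sum_mul_exp_neg_mul_le_exp (fun j ↦ (div_pos (hw j) hS).le) hp1 hℓ hη
    _ = log S - η * ∑ j, (w j / S) * ℓ j + η ^ 2 / 2 := by
        rw [log_mul hS.ne' (exp_pos _).ne', log_exp]; ring

variable {T : ℕ} {ℓ : Fin T → ι → ℝ} {w : ℕ → ι → ℝ}

lemma exponentialWeights_pos (hw0 : ∀ j, 0 < w 0 j)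
    (hw : ∀ (t : Fin T) j, w (t + 1) j = w t j * exp (-η * ℓ t j)) :
    ∀ t ≤ T, ∀ j, 0 < w t j := by
  intro t ht j
  induction t with
  | zero => exact hw0 j
  | succ t ih => rw [hw ⟨t, ht⟩]; exact mul_pos (ih (by omega)) (exp_pos _)

lemma log_exponentialWeights (hw0 : ∀ j, 0 < w 0 j)
    (hw : ∀ (t : Fin T) j, w (t + 1) j = w t j * exp (-η * ℓ t j)) (j : ι) :
    log (w T j) = log (w 0 j) - η * ∑ t, ℓ t j := by
  have hpos := exponentialWeights_pos hw0 hw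
  have hstep (t : Fin T) : log (w (t + 1) j) - log (w t j) = -(η * ℓ t j) := by
    rw [hw, log_mul (hpos t t.2.le j).ne' (exp_pos _).ne', log_exp]; ring
  have htelescope := Fin.sum_univ_succ_sub (fun t ↦ log (w t j)) T
  simp only [hstep, sum_neg_distrib] at htelescope
  rw [mul_sum]; linarith

lemma exponentialWeights_regret_le [Fintype ι] [Nonempty ι] (hw0 : ∀ j, w 0 j = 1)
    (hw : ∀ (t : Fin T) j, w (t + 1) j = w t j * exp (-η * ℓ t j))
    (hℓ : ∀ t j, ℓ t j ∈ Icc (0 : ℝ) 1) (hη : 0 < η) (i : ι) :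
    ∑ t : Fin T, ∑ j, (w t j / ∑ k, w t k) * ℓ t j - ∑ t, ℓ t i
      ≤ log (Fintype.card ι) / η + η * T / 2 := by
  have hpos := exponentialWeights_pos (fun j ↦ (hw0 j).symm ▸ one_pos) hw
  set Φ : ℕ → ℝ := fun t ↦ log (∑ j, w t j)
  have hstep (t : Fin T) :
      Φ (t + 1) - Φ t ≤ -η * ∑ j, (w t j / ∑ k, w t k) * ℓ t j + η ^ 2 / 2 := by
    have := log_sum_mul_exp_neg_mul_le (hpos t t.2.le) (hℓ t) hη.le
    simp only [Φ, hw]; linarith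
  have hpotential := (Fin.sum_univ_succ_sub Φ T).symm.trans_le (sum_le_sum fun t _ ↦ hstep t)
  have hΦ0 : Φ 0 = log (Fintype.card ι) := by simp [Φ, hw0]
  have hexpert : -η * ∑ t, ℓ t i ≤ Φ T := by
    have := log_exponentialWeights (fun j ↦ (hw0 j).symm ▸ one_pos) hw i
    rw [hw0, log_one, zero_sub] at this
    rw [neg_mul, ← this]
    exact log_le_log (hpos T le_rfl i)
      (single_le_sum (fun j _ ↦ (hpos T le_rfl j).le) (mem_univ i))
  rw [sum_add_distrib, ← mul_sum, sum_const, card_univ, Fintype.card_fin, nsmul_eq_mul]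
    at hpotential
  rw [← sub_le_iff_le_add, le_div_iff₀ hη]
  linarith

end ExponentialWeights

lemma div_add_mul_div_two_eq_sqrt {a T : ℝ} (ha : 0 ≤ a) (hT : 0 < T) :
    a / √(2 * a / T) + √(2 * a / T) * T / 2 = √(2 * T * a) := by
  set η := √(2 * a / T)
  have hη2 : η ^ 2 * T = 2 * a := by rw [sq_sqrt (by positivity)]; field_simp
  have hsqrt : √(2 * T * a) = η * T := by
    rw [show 2 * T * a = (η * T) ^ 2 by linear_combination (-T) * hη2]
    exact sqrt_sq (by positivity)
  rcases ha.eq_or_lt with rfl | ha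
  · simp [η]
  have hη : 0 < η := sqrt_pos.2 (by positivity)
  rw [hsqrt]; field_simp; linear_combination (-1) * hη2

/-- **Regret bound for the weighted majority (exponential weights) algorithm.**
Let `v 0, ..., v (T-1) ∈ [0,1]^K` be an arbitrary sequence of loss vectors, and let the
weights evolve as `w 0 j = 1`, `w (t+1) j = w t j * exp (-η * v t j)` with learning rate
`η = √(2 log K / T)`.  Then the expected loss of the algorithm exceeds the loss of the best
expert by at most `√(2 T log K)`. -/
theorem wma_regret (K T : ℕ) (hK : 2 ≤ K) (hT : 1 ≤ T)
    (v : Fin T → Fin K → ℝ) (hv : ∀ t j, v t j ∈ Set.Icc (0 : ℝ) 1)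
    (η : ℝ) (hη : η = Real.sqrt (2 * Real.log K / T))
    (w : ℕ → Fin K → ℝ)
    (hw0 : ∀ j, w 0 j = 1)
    (hw : ∀ (t : Fin T) (j : Fin K),
      w (t.1 + 1) j = w t.1 j * Real.exp (-η * v t j)) :
    (∑ t : Fin T, ∑ j : Fin K, (w t.1 j / ∑ i : Fin K, w t.1 i) * v t j)
        - (⨅ i : Fin K, ∑ t : Fin T, v t i)
      ≤ Real.sqrt (2 * T * Real.log K) := by
  have : Nonempty (Fin K) := ⟨⟨0, by omega⟩⟩
  have hlogK : 0 < log K := log_pos (by exact_mod_cast hK)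
  have hT₀ : (0 : ℝ) < T := by exact_mod_cast hT
  have hη₀ : 0 < η := hη ▸ sqrt_pos.2 (by positivity)
  obtain ⟨i, hi⟩ := exists_eq_ciInf_of_finite (f := fun i ↦ ∑ t : Fin T, v t i)
  rw [← hi, ← div_add_mul_div_two_eq_sqrt hlogK.le hT₀, ← hη]
  simpa only [Fintype.card_fin] using exponentialWeights_regret_le hw0 hw hv hη₀ i
end

section
/- Let Y be a set, ε' > 0, δ ∈ (0,1), and let A_1,...,A_K be independent randomized algorithms from Y to ℝ, each of which is (ε',0)-differentially private, i.e., Pr(A_j(y) ∈ S) ≤ e^{ε'} · Pr(A_j(y') ∈ S) for all j ∈ [K], all y, y' ∈ Y and all measurable S ⊆ ℝ. Then the composition A(y) = (A_1(y),...,A_K(y)) : Y → ℝ^K is (K(ε')²/2 + √(2 ln(1/δ) · K · (ε')²), δ)-differentially private: for all y, y' ∈ Y and all measurable S ⊆ ℝ^K, Pr(A(y) ∈ S) ≤ e^{K(ε')²/2 + √(2 ln(1/δ) K (ε')²)} · Pr(A(y') ∈ S) + δ. -/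
/-!
Each density `f j = d(A j y)/d(A j y')` takes values in `[e^{-ε'}, e^{ε'}]` and has mean `1`
under `A j y'`. Since `u ↦ u ^ (1 + l)` is convex, its integral against `A j y'` is at most the
chord through the endpoints evaluated at the mean, and a hyperbolic-function estimate bounds that
chord value by `exp (l (1 + l) ε'² / 2)`: pure privacy implies `ε'²/2`-concentrated privacy.
These Rényi moments multiply over the product measure, so the product density `F` satisfies
`∫ F ^ (1 + l) ≤ exp (l (1 + l) ρ)` with `ρ = K ε'² / 2`. Finally `S` is split along
`{F ≤ e^t}`, and Markov's inequality for `F ^ l` under `A y` bounds the rest by `δ`, for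
`t = ρ + 2 √(ρ log (1/δ))` and `l = √(log (1/δ) / ρ)`.
-/

open MeasureTheory ENNReal Real Set

namespace Real

theorem sinh_le_mul_cosh {x : ℝ} (hx : 0 ≤ x) : sinh x ≤ x * cosh x := by
  rw [sinh_eq_tsum, cosh_eq_tsum, ← tsum_mul_left]
  refine x.hasSum_sinh.summable.tsum_le_tsum (fun n ↦ ?_) (x.hasSum_cosh.summable.mul_left x)
  rw [mul_div_assoc', ← pow_succ']
  gcongr
  omega

theorem cosh_sub_one_le_mul_sinh {x : ℝ} (hx : 0 ≤ x) : cosh x - 1 ≤ x / 2 * sinh x := by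
  have hsinh : 0 ≤ sinh (x / 2) := sinh_nonneg_iff.2 (by positivity)
  have hhalf := mul_le_mul_of_nonneg_left (sinh_le_mul_cosh (x := x / 2) (by positivity)) hsinh
  have hcosh : cosh x - 1 = 2 * sinh (x / 2) ^ 2 := by
    nth_rw 1 [← add_halves x]
    rw [cosh_add]
    linear_combination cosh_sq (x / 2)
  have hsinh2 : sinh x = 2 * sinh (x / 2) * cosh (x / 2) := by
    rw [← sinh_two_mul, mul_div_cancel₀ x two_ne_zero]
  rw [hcosh, hsinh2]
  linarith

theorem sinh_one_add_mul_sub_sinh_mul_le {x l : ℝ} (hx : 0 ≤ x) (hl : 0 ≤ l) :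
    sinh ((1 + l) * x) - sinh (l * x) ≤ sinh x * exp (l * (1 + l) * x ^ 2 / 2) := by
  have hlx : 0 ≤ l * x := mul_nonneg hl hx
  have hcosh : cosh (l * x) ≤ exp ((l * x) ^ 2 / 2) := cosh_le_exp_half_sq _
  have hsinh : sinh (l * x) ≤ l * x * exp ((l * x) ^ 2 / 2) :=
    (sinh_le_mul_cosh hlx).trans (mul_le_mul_of_nonneg_left hcosh hlx)
  have hsx : 0 ≤ sinh x := sinh_nonneg_iff.2 hx
  have hcx : 0 ≤ cosh x - 1 := by linarith [one_le_cosh x]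
  calc sinh ((1 + l) * x) - sinh (l * x)
      = sinh x * cosh (l * x) + (cosh x - 1) * sinh (l * x) := by
        rw [add_mul, one_mul, sinh_add]; ring
    _ ≤ sinh x * exp ((l * x) ^ 2 / 2) + x / 2 * sinh x * (l * x * exp ((l * x) ^ 2 / 2)) := by
        gcongr
        exact cosh_sub_one_le_mul_sinh hx
    _ = sinh x * exp ((l * x) ^ 2 / 2) * (1 + l * x ^ 2 / 2) := by ring
    _ ≤ sinh x * exp ((l * x) ^ 2 / 2) * exp (l * x ^ 2 / 2) := by
        gcongr
        linarith [add_one_le_exp (l * x ^ 2 / 2)]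
    _ = sinh x * exp (l * (1 + l) * x ^ 2 / 2) := by
        rw [mul_assoc, ← exp_add]; ring_nf

end Real

theorem ConvexOn.mul_le_chord {φ : ℝ → ℝ} {a b u : ℝ} (hφ : ConvexOn ℝ (Icc a b) φ)
    (hu : u ∈ Icc a b) : (b - a) * φ u ≤ (b - u) * φ a + (u - a) * φ b := by
  rcases hu.1.eq_or_lt with rfl | hau
  · simp
  rcases hu.2.eq_or_lt with rfl | hub
  · simp
  exact hφ.secant_mono_aux1 (left_mem_Icc.2 (hau.trans hub).le)
    (right_mem_Icc.2 (hau.trans hub).le) hau hub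

theorem ConvexOn.mul_integral_comp_le_chord {α : Type*} [MeasurableSpace α] {μ : Measure α}
    [IsProbabilityMeasure μ] {φ : ℝ → ℝ} {g : α → ℝ} {a b : ℝ} (hφ : ConvexOn ℝ (Icc a b) φ)
    (hg : ∀ᵐ x ∂μ, g x ∈ Icc a b) (hgi : Integrable g μ) (hφg : Integrable (fun x ↦ φ (g x)) μ) :
    (b - a) * ∫ x, φ (g x) ∂μ ≤ (b - ∫ x, g x ∂μ) * φ a + (∫ x, g x ∂μ - a) * φ b := by
  have hchord : (fun x ↦ (b - a) * φ (g x)) ≤ᵐ[μ] fun x ↦ (b - g x) * φ a + (g x - a) * φ b :=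
    hg.mono fun x hx ↦ hφ.mul_le_chord hx
  have hbg : Integrable (fun x ↦ (b - g x) * φ a) μ := ((integrable_const b).sub hgi).mul_const _
  have hga : Integrable (fun x ↦ (g x - a) * φ b) μ := (hgi.sub (integrable_const a)).mul_const _
  rw [← integral_const_mul]
  refine (integral_mono_ae (hφg.const_mul _) (hbg.add hga) hchord).trans_eq ?_
  rw [Pi.add_def, integral_add hbg hga, integral_mul_const, integral_mul_const,
    integral_sub (integrable_const b) hgi, integral_sub hgi (integrable_const a)]
  simp

theorem Set.indicator_univ_pi_prod_apply {ι : Type*} [Fintype ι] {α : ι → Type*} {M : Type*}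
    [CommMonoidWithZero M] (s : ∀ i, Set (α i)) (f : ∀ i, α i → M) (x : ∀ i, α i) :
    (univ.pi s).indicator (fun x ↦ ∏ i, f i (x i)) x = ∏ i, (s i).indicator (f i) (x i) := by
  by_cases hx : x ∈ univ.pi s
  · rw [indicator_of_mem hx]
    exact Finset.prod_congr rfl fun i _ ↦ (indicator_of_mem (hx i (mem_univ i)) _).symm
  · obtain ⟨i, hi⟩ : ∃ i, x i ∉ s i := by simpa [mem_univ_pi] using hx
    rw [indicator_of_notMem hx, Finset.prod_eq_zero (Finset.mem_univ i) (indicator_of_notMem hi _)]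

namespace MeasureTheory

section Moments

variable {α : Type*} [MeasurableSpace α] {μ ν : Measure α}

theorem integral_rpow_le_of_mem_Icc_exp [IsProbabilityMeasure μ] {g : α → ℝ} {ε l : ℝ}
    (hε : 0 < ε) (hl : 0 ≤ l)
    (hg : ∀ᵐ x ∂μ, g x ∈ Icc (exp (-ε)) (exp ε)) (hgi : Integrable g μ) (hg1 : ∫ x, g x ∂μ = 1)
    (hgl : Integrable (fun x ↦ g x ^ (1 + l)) μ) :
    ∫ x, g x ^ (1 + l) ∂μ ≤ exp (l * (1 + l) * ε ^ 2 / 2) := by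
  have hconv : ConvexOn ℝ (Icc (exp (-ε)) (exp ε)) (· ^ (1 + l)) :=
    (convexOn_rpow (by linarith)).subset (fun u hu ↦ (exp_pos _).le.trans hu.1) (convex_Icc _ _)
  have hchord := hconv.mul_integral_comp_le_chord hg hgi hgl
  -- the chord of `u ↦ u ^ (1 + l)` over `[e^{-ε}, e^ε]`, evaluated at the mean `1`
  have hmean : (exp ε - 1) * exp (-ε) ^ (1 + l) + (1 - exp (-ε)) * exp ε ^ (1 + l)
      = 2 * (sinh ((1 + l) * ε) - sinh (l * ε)) := by
    simp only [← exp_mul, sinh_eq]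
    rw [show -ε * (1 + l) = -ε + -(l * ε) by ring, show ε * (1 + l) = ε + l * ε by ring,
      show -((1 + l) * ε) = -ε + -(l * ε) by ring, show (1 + l) * ε = ε + l * ε by ring]
    have hinv : exp ε * exp (-ε) = 1 := by rw [← exp_add, add_neg_cancel, exp_zero]
    simp only [exp_add]
    linear_combination (exp (-(l * ε)) - exp (l * ε)) * hinv
  have hwidth : exp ε - exp (-ε) = 2 * sinh ε := by rw [sinh_eq]; ring
  rw [hg1, hmean, hwidth] at hchord
  have hsinh : 0 < sinh ε := sinh_pos_iff.2 hε
  nlinarith [sinh_one_add_mul_sub_sinh_mul_le hε.le hl]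

theorem lintegral_rpow_le_of_mem_Icc_exp [IsProbabilityMeasure μ] {f : α → ℝ≥0∞} {ε l : ℝ}
    (hε : 0 < ε) (hl : 0 ≤ l)
    (hf : AEMeasurable f μ) (hf1 : ∫⁻ x, f x ∂μ = 1)
    (hfb : ∀ᵐ x ∂μ, f x ∈ Icc (ENNReal.ofReal (exp (-ε))) (ENNReal.ofReal (exp ε))) :
    ∫⁻ x, f x ^ (1 + l) ∂μ ≤ ENNReal.ofReal (exp (l * (1 + l) * ε ^ 2 / 2)) := by
  have hfin : ∀ᵐ x ∂μ, f x ≠ ∞ := hfb.mono fun x hx ↦ ne_top_of_le_ne_top ofReal_ne_top hx.2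
  have hg : ∀ᵐ x ∂μ, (f x).toReal ∈ Icc (exp (-ε)) (exp ε) := by
    filter_upwards [hfb, hfin] with x hx hxt
    exact ⟨(ofReal_le_iff_le_toReal hxt).1 hx.1, toReal_le_of_le_ofReal (exp_pos _).le hx.2⟩
  have hgi : Integrable (fun x ↦ (f x).toReal) μ :=
    integrable_toReal_of_lintegral_ne_top hf (by simp [hf1])
  have hg1 : ∫ x, (f x).toReal ∂μ = 1 := by
    rw [integral_toReal hf (hfin.mono fun _ ↦ lt_top_iff_ne_top.2), hf1, toReal_one]
  have hgl : Integrable (fun x ↦ (f x).toReal ^ (1 + l)) μ := by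
    refine .of_bound (hgi.aemeasurable.pow_const _).aestronglyMeasurable (exp ε ^ (1 + l)) ?_
    filter_upwards [hg] with x hx
    rw [norm_of_nonneg (by positivity)]
    exact rpow_le_rpow toReal_nonneg hx.2 (by linarith)
  calc ∫⁻ x, f x ^ (1 + l) ∂μ = ENNReal.ofReal (∫ x, (f x).toReal ^ (1 + l) ∂μ) := by
        rw [ofReal_integral_eq_lintegral_ofReal hgl (ae_of_all _ fun _ ↦ by positivity)]
        refine lintegral_congr_ae (hfin.mono fun x hx ↦ ?_)
        dsimp only
        rw [← ofReal_rpow_of_nonneg toReal_nonneg (by linarith), ofReal_toReal hx]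
    _ ≤ ENNReal.ofReal (exp (l * (1 + l) * ε ^ 2 / 2)) :=
        ofReal_le_ofReal (integral_rpow_le_of_mem_Icc_exp hε hl hg hgi hg1 hgl)

theorem Measure.rnDeriv_le_of_le_smul [SigmaFinite ν] {c : ℝ≥0∞} (h : μ ≤ c • ν) :
    ∀ᵐ x ∂ν, μ.rnDeriv ν x ≤ c := by
  refine ae_le_of_forall_setLIntegral_le_of_sigmaFinite (μ.measurable_rnDeriv ν) fun s _ _ ↦ ?_
  calc ∫⁻ x in s, μ.rnDeriv ν x ∂ν ≤ μ s := setLIntegral_rnDeriv_le s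
    _ ≤ c * ν s := h s
    _ = ∫⁻ _ in s, c ∂ν := by rw [setLIntegral_const, mul_comm]

theorem Measure.inv_le_rnDeriv_of_le_smul [SigmaFinite ν] [μ.HaveLebesgueDecomposition ν] {c : ℝ≥0∞}
    (hμν : μ ≪ ν) (h : ν ≤ c • μ) : ∀ᵐ x ∂ν, c⁻¹ ≤ μ.rnDeriv ν x := by
  refine ae_le_of_forall_setLIntegral_le_of_sigmaFinite measurable_const fun s _ _ ↦ ?_
  calc ∫⁻ _ in s, c⁻¹ ∂ν = c⁻¹ * ν s := by rw [setLIntegral_const]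
    _ ≤ c⁻¹ * (c * μ s) := by gcongr; exact h s
    _ ≤ μ s := by rw [← mul_assoc]; exact mul_le_of_le_one_left' (ENNReal.inv_mul_le_one c)
    _ = ∫⁻ x in s, μ.rnDeriv ν x ∂ν := (setLIntegral_rnDeriv hμν s).symm

theorem Measure.lintegral_rnDeriv_rpow_le [IsProbabilityMeasure μ] [IsProbabilityMeasure ν]
    {ε l : ℝ} (hε : 0 < ε) (hl : 0 ≤ l) (hμν : μ ≤ ENNReal.ofReal (exp ε) • ν)
    (hνμ : ν ≤ ENNReal.ofReal (exp ε) • μ) :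
    ∫⁻ x, μ.rnDeriv ν x ^ (1 + l) ∂ν ≤ ENNReal.ofReal (exp (l * (1 + l) * ε ^ 2 / 2)) := by
  have hac : μ ≪ ν :=
    (Measure.absolutelyContinuous_of_le hμν).trans Measure.smul_absolutelyContinuous
  have hlow : (ENNReal.ofReal (exp ε))⁻¹ = ENNReal.ofReal (exp (-ε)) := by
    rw [← ofReal_inv_of_pos (exp_pos _), exp_neg]
  refine lintegral_rpow_le_of_mem_Icc_exp hε hl (μ.measurable_rnDeriv ν).aemeasurable
    (by rw [lintegral_rnDeriv hac, measure_univ]) ?_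
  filter_upwards [Measure.rnDeriv_le_of_le_smul hμν, Measure.inv_le_rnDeriv_of_le_smul hac hνμ]
    with x hup hlo
  exact ⟨hlow ▸ hlo, hup⟩

end Moments

section Pi

variable {ι : Type*} [Fintype ι] {α : ι → Type*} [∀ i, MeasurableSpace (α i)]

theorem lintegral_fintype_prod_eq_prod (ν : ∀ i, Measure (α i)) [∀ i, IsProbabilityMeasure (ν i)]
    {f : ∀ i, α i → ℝ≥0∞} (hf : ∀ i, Measurable (f i)) :
    ∫⁻ x, ∏ i, f i (x i) ∂Measure.pi ν = ∏ i, ∫⁻ t, f i t ∂ν i := by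
  rw [ProbabilityTheory.lintegral_prod_eq_prod_lintegral_of_indepFun _ _
    (ProbabilityTheory.iIndepFun_pi fun i ↦ (hf i).aemeasurable)
    fun i ↦ (hf i).comp (measurable_pi_apply i)]
  exact Finset.prod_congr rfl fun i _ ↦ (measurePreserving_eval ν i).lintegral_comp (hf i)

theorem Measure.pi_withDensity (ν : ∀ i, Measure (α i)) [∀ i, IsProbabilityMeasure (ν i)]
    {f : ∀ i, α i → ℝ≥0∞} (hf : ∀ i, Measurable (f i))
    [∀ i, SigmaFinite ((ν i).withDensity (f i))] :
    Measure.pi (fun i ↦ (ν i).withDensity (f i))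
      = (Measure.pi ν).withDensity fun x ↦ ∏ i, f i (x i) := by
  refine Measure.pi_eq fun s hs ↦ ?_
  rw [withDensity_apply _ (.univ_pi hs), ← lintegral_indicator (.univ_pi hs)]
  simp_rw [indicator_univ_pi_prod_apply]
  rw [lintegral_fintype_prod_eq_prod ν fun i ↦ (hf i).indicator (hs i)]
  exact Finset.prod_congr rfl fun i _ ↦ by
    rw [lintegral_indicator (hs i), withDensity_apply _ (hs i)]

theorem Measure.pi_eq_withDensity_prod_rnDeriv {μ ν : ∀ i, Measure (α i)}
    [∀ i, IsProbabilityMeasure (μ i)] [∀ i, IsProbabilityMeasure (ν i)] (hμν : ∀ i, μ i ≪ ν i) :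
    Measure.pi μ = (Measure.pi ν).withDensity fun x ↦ ∏ i, (μ i).rnDeriv (ν i) (x i) := by
  have hμ : (fun i ↦ (ν i).withDensity ((μ i).rnDeriv (ν i))) = μ :=
    funext fun i ↦ withDensity_rnDeriv_eq _ _ (hμν i)
  have : ∀ i, SigmaFinite ((ν i).withDensity ((μ i).rnDeriv (ν i))) := fun i ↦ by
    rw [congrFun hμ i]; infer_instance
  rw [← pi_withDensity ν fun i ↦ measurable_rnDeriv _ _, hμ]

theorem Measure.lintegral_prod_rnDeriv_rpow_le {μ ν : ∀ i, Measure (α i)}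
    [∀ i, IsProbabilityMeasure (μ i)] [∀ i, IsProbabilityMeasure (ν i)] {ε l : ℝ} (hε : 0 < ε)
    (hl : 0 ≤ l) (hμν : ∀ i, μ i ≤ ENNReal.ofReal (exp ε) • ν i)
    (hνμ : ∀ i, ν i ≤ ENNReal.ofReal (exp ε) • μ i) :
    ∫⁻ x, (∏ i, (μ i).rnDeriv (ν i) (x i)) ^ (1 + l) ∂Measure.pi ν
      ≤ ENNReal.ofReal (exp (l * (1 + l) * (Fintype.card ι * ε ^ 2 / 2))) := by
  calc ∫⁻ x, (∏ i, (μ i).rnDeriv (ν i) (x i)) ^ (1 + l) ∂Measure.pi ν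
      = ∏ i, ∫⁻ t, (μ i).rnDeriv (ν i) t ^ (1 + l) ∂ν i := by
        simp_rw [← ENNReal.prod_rpow_of_nonneg (by linarith : 0 ≤ 1 + l)]
        exact lintegral_fintype_prod_eq_prod ν fun i ↦ (measurable_rnDeriv _ _).pow_const _
    _ ≤ ∏ _i : ι, ENNReal.ofReal (exp (l * (1 + l) * ε ^ 2 / 2)) :=
        Finset.prod_le_prod' fun i _ ↦ lintegral_rnDeriv_rpow_le hε hl (hμν i) (hνμ i)
    _ = ENNReal.ofReal (exp (l * (1 + l) * (Fintype.card ι * ε ^ 2 / 2))) := by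
        rw [Finset.prod_const, Finset.card_univ, ← ofReal_pow (exp_pos _).le, ← exp_nat_mul]
        ring_nf

end Pi

section WithDensity

variable {α : Type*} [MeasurableSpace α] {ν : Measure α} {F : α → ℝ≥0∞}

theorem withDensity_apply_le_mul_add (hF : Measurable F) (c : ℝ≥0∞) {S : Set α}
    (hS : MeasurableSet S) :
    ν.withDensity F S ≤ c * ν S + ν.withDensity F {x | c < F x} := by
  have hE : MeasurableSet {x | c < F x} := measurableSet_lt measurable_const hF
  rw [withDensity_apply _ hS, withDensity_apply _ hE, ← lintegral_inter_add_sdiff _ S hE, add_comm]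
  gcongr
  · calc ∫⁻ x in S \ {x | c < F x}, F x ∂ν ≤ ∫⁻ _ in S \ {x | c < F x}, c ∂ν :=
          setLIntegral_mono measurable_const fun x hx ↦ not_lt.1 hx.2
      _ ≤ c * ν S := by rw [setLIntegral_const]; gcongr; exact sdiff_subset
  · exact inter_subset_right

theorem withDensity_setOf_lt_le (hF : Measurable F) {c : ℝ≥0∞} (hc0 : c ≠ 0) (hc : c ≠ ∞)
    {l : ℝ} (hl : 0 ≤ l) :
    ν.withDensity F {x | c < F x} ≤ (c ^ l)⁻¹ * ∫⁻ x, F x ^ (1 + l) ∂ν := by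
  have hcl : (c ^ l)⁻¹ * c ^ l = 1 :=
    ENNReal.inv_mul_cancel (rpow_pos (pos_iff_ne_zero.2 hc0) hc).ne' (rpow_ne_top_of_nonneg hl hc)
  have hE : MeasurableSet {x | c < F x} := measurableSet_lt measurable_const hF
  rw [withDensity_apply _ hE, ← lintegral_const_mul _ (hF.pow_const _)]
  refine (setLIntegral_mono' hE fun x hx ↦ ?_).trans
    (setLIntegral_le_lintegral _ _)
  calc F x = (c ^ l)⁻¹ * c ^ l * F x := by rw [hcl, one_mul]
    _ ≤ (c ^ l)⁻¹ * F x ^ l * F x := by gcongr; exact le_of_lt hx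
    _ = (c ^ l)⁻¹ * F x ^ (1 + l) := by
        rw [rpow_add_of_nonneg _ _ zero_le_one hl, ENNReal.rpow_one, mul_assoc, mul_comm (F x ^ l)]

-- The order `l = (t - ρ) / (2ρ) = √(log (1/δ) / ρ)` minimizes the Markov bound
-- `exp (l (1 + l) ρ - l t)`, and `t` is chosen to make that minimum `δ`.
theorem withDensity_apply_le_exp_mul_add (hF : Measurable F) {ρ δ : ℝ} (hρ : 0 < ρ) (hδ0 : 0 < δ)
    (hδ1 : δ ≤ 1)
    (hmom : ∀ l : ℝ, 0 ≤ l → ∫⁻ x, F x ^ (1 + l) ∂ν ≤ ENNReal.ofReal (exp (l * (1 + l) * ρ)))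
    {S : Set α} (hS : MeasurableSet S) :
    ν.withDensity F S
      ≤ ENNReal.ofReal (exp (ρ + 2 * √(ρ * Real.log (1 / δ)))) * ν S + ENNReal.ofReal δ := by
  have hL : 0 ≤ Real.log (1 / δ) := log_nonneg (one_le_one_div hδ0 hδ1)
  have hδL : exp (-Real.log (1 / δ)) = δ := by rw [one_div, Real.log_inv, neg_neg, exp_log hδ0]
  set L := Real.log (1 / δ)
  set t := ρ + 2 * √(ρ * L)
  set l := √(L / ρ)
  have hl : 0 ≤ l := sqrt_nonneg _
  have hexponent : -(t * l) + l * (1 + l) * ρ = -L := by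
    have hl2 : l ^ 2 * ρ = L := by rw [sq_sqrt (by positivity)]; field_simp
    have hlt : l * √(ρ * L) = L := by
      rw [← sqrt_mul (by positivity), show L / ρ * (ρ * L) = L ^ 2 by field_simp, sqrt_sq hL]
    linear_combination hl2 - 2 * hlt
  have htail : (ENNReal.ofReal (exp t) ^ l)⁻¹ * ENNReal.ofReal (exp (l * (1 + l) * ρ))
      = ENNReal.ofReal δ := by
    rw [ofReal_rpow_of_pos (exp_pos _), ← exp_mul, ← ofReal_inv_of_pos (exp_pos _), ← exp_neg,
      ← ofReal_mul (exp_pos _).le, ← exp_add, hexponent, hδL]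
  set c := ENNReal.ofReal (exp t)
  calc ν.withDensity F S ≤ c * ν S + ν.withDensity F {x | c < F x} :=
        withDensity_apply_le_mul_add hF c hS
    _ ≤ c * ν S + (c ^ l)⁻¹ * ENNReal.ofReal (exp (l * (1 + l) * ρ)) := by
        gcongr
        refine (withDensity_setOf_lt_le hF (ofReal_pos.2 (exp_pos t)).ne' ofReal_ne_top hl).trans ?_
        gcongr
        exact hmom l hl
    _ = c * ν S + ENNReal.ofReal δ := by rw [htail]

end WithDensity

end MeasureTheory

/-- **Advanced composition for independent private mechanisms.**
If `A 1, …, A K : Y → ℝ` are independent randomized algorithms, each `(ε', 0)`-differentially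
private, then their independent composition `A y = (A 1 y, …, A K y) : Y → ℝ^K` is
`(K ε'²/2 + √(2 ln(1/δ) K ε'²), δ)`-differentially private. -/
theorem advanced_composition {Y : Type*} (K : ℕ) (ε' δ : ℝ)
    (hε' : 0 < ε') (hδ : δ ∈ Set.Ioo (0 : ℝ) 1)
    (A : Fin K → Y → Measure ℝ)
    (hprob : ∀ j y, IsProbabilityMeasure (A j y))
    (hdp : ∀ j (y y' : Y) (S : Set ℝ), MeasurableSet S →
      A j y S ≤ ENNReal.ofReal (Real.exp ε') * A j y' S) :
    ∀ (y y' : Y) (S : Set (Fin K → ℝ)), MeasurableSet S →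
      Measure.pi (fun j => A j y) S ≤
        ENNReal.ofReal
            (Real.exp ((K : ℝ) * ε' ^ 2 / 2 +
              Real.sqrt (2 * Real.log (1 / δ) * K * ε' ^ 2))) *
          Measure.pi (fun j => A j y') S + ENNReal.ofReal δ := by
  intro y y' S hS
  obtain rfl | hK := Nat.eq_zero_or_pos K
  · rw [Subsingleton.elim (fun j : Fin 0 ↦ A j y) fun j ↦ A j y']
    simp
  have hA : ∀ j (y y' : Y), A j y ≤ ENNReal.ofReal (exp ε') • A j y' := fun j y y' ↦
    Measure.le_iff.2 fun S hS ↦ hdp j y y' S hS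
  have hexp : K * ε' ^ 2 / 2 + √(2 * Real.log (1 / δ) * K * ε' ^ 2)
      = K * ε' ^ 2 / 2 + 2 * √(K * ε' ^ 2 / 2 * Real.log (1 / δ)) := by
    rw [show 2 * Real.log (1 / δ) * K * ε' ^ 2 = 2 ^ 2 * (K * ε' ^ 2 / 2 * Real.log (1 / δ)) by
        ring,
      sqrt_mul' _ (mul_nonneg (by positivity) (log_nonneg (one_le_one_div hδ.1 hδ.2.le))),
      sqrt_sq zero_le_two]
  rw [Measure.pi_eq_withDensity_prod_rnDeriv fun j ↦
    (Measure.absolutelyContinuous_of_le (hA j y y')).trans Measure.smul_absolutelyContinuous, hexp]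
  have hF : Measurable fun x : Fin K → ℝ ↦ ∏ j, (A j y).rnDeriv (A j y') (x j) :=
    Finset.measurable_prod _ fun j _ ↦ (Measure.measurable_rnDeriv _ _).comp (measurable_pi_apply j)
  refine withDensity_apply_le_exp_mul_add hF (by positivity) hδ.1 hδ.2.le (fun l hl ↦ ?_) hS
  simpa only [Fintype.card_fin] using
    Measure.lintegral_prod_rnDeriv_rpow_le hε' hl (fun j ↦ hA j y y') fun j ↦ hA j y' y
end

section
/- Consider Algorithm 1 (locally privatized WMA) with hypothesis class F = {f_1,...,f_K} (K ≥ 2), horizon T > log K, privacy parameters ε > 0, δ ∈ (0,1), and parameter γ > 0. Let b = (2√(2K ln(1/δ)) + √(Kε))·log(KT)/ε be the Laplace scale, c'(γ) = b·(γ + log K + log T), and c(γ) = 1/(log(KT) + 2c'(γ)). Fix any f = f_{j*} ∈ F and any features x^T ∈ X^T, and assume the clipping bounds 1/(TKM) ≤ p̄_{t,j}[y'] ≤ 1/M hold for all t, j, y'. Then the event E = { |Lap^t_j| ≤ c'(γ) for all t ∈ [T], j ∈ [K] } has probability at least 1 − e^{−γ}, and on E the predictions p̂_t of Algorithm 1 satisfy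 E_{Y'^T}[ ∑_{t=1}^T KL(f(x_t), p̂_t) ] ≤ (1/c(γ))·√(2T log K) + 3·log(KT) + ∑_{t=1}^T ∑_{j=1}^K E_{Y'^T}[w̃^t_j]·Lap^t_j − ∑_{t=1}^T Lap^t_{j*}, where the expectation E_{Y'^T} is over the labels Y_t ~ f(x_t) and the clipping randomness (Y'_t = h_t(Y_t) ~ h_t∘f(x_t)), holding the Laplace values fixed. -/
/-!
(a) A Laplace variable of scale `b` leaves `[-c', c']` with probability
`exp (-c' / b) = e^{-γ} / (K T)`, and Bernoulli's inequality bounds the product over the `K T`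
independent coordinates below by `1 - e^{-γ}`.

(b) Fix the noise and a path of clipped labels. The clipping bounds and `|Lap| ≤ c'` put the
privatized losses in `[0, 1]`, so the exponential-weights regret bound `log K / η + T η / 2`
applies; as the losses are affine in `log p̄_{t,j}(Y'_t) + Lap_{t,j}`, concavity of `log` turns
it into a bound on the log-loss regret `∑_t log (p̄_{t,j*}(Y'_t) / p̄_t(Y'_t))` of the mixture.
The mixture `p̄_t` only depends on the labels of rounds before `t`, so averaging out `Y'_t`
turns its log-loss into `KL(p̄_{t,j*}, p̄_t)`. Finally
`KL(f(x_t), p̂_t) ≤ KL(p̄_{t,j*}, p̄_t) + 3 log (K T) / T`: summing over the blocks `S_{y,t}`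
does not increase `KL` (log-sum inequality), clipping shrinks `f(x_t)[y]` by at most the factor
`1 - 1/T` (or `1/(K T)` when `T = 1`), and it moves a total mass of at most `2/T` between labels
whose log-ratios are bounded by `log (K T)`.
-/

open MeasureTheory ENNReal Finset

/-- `p` is a probability distribution on the finite set `Fin M`. -/
def IsDist {M : ℕ} (p : Fin M → ℝ) : Prop :=
  (∀ y, 0 ≤ p y) ∧ ∑ y, p y = 1

/-- The Laplace distribution on `ℝ` with scale `b`, i.e. the measure with density
`x ↦ (1/(2b)) · exp(−|x|/b)` with respect to Lebesgue measure. -/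
noncomputable def laplaceMeasure (b : ℝ) : Measure ℝ :=
  MeasureTheory.volume.withDensity fun x =>
    ENNReal.ofReal ((1 / (2 * b)) * Real.exp (-|x| / b))

namespace Real

theorem exp_neg_le_one_sub_add_sq_div_two_s9 {x : ℝ} (hx : 0 ≤ x) :
    exp (-x) ≤ 1 - x + x ^ 2 / 2 := by
  have hpos : 0 < 1 + x + x ^ 2 / 2 := by positivity
  calc exp (-x) = (exp x)⁻¹ := exp_neg x
    _ ≤ (1 + x + x ^ 2 / 2)⁻¹ := inv_anti₀ hpos (quadratic_le_exp_of_nonneg hx)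
    _ ≤ 1 - x + x ^ 2 / 2 := by
      rw [inv_le_iff_one_le_mul₀' hpos]
      nlinarith [pow_nonneg hx 4]

theorem mul_log_div_le_sum_mul_log_div {ι : Type*} (s : Finset ι) {a b : ι → ℝ}
    (ha : ∀ i ∈ s, 0 ≤ a i) (hb : ∀ i ∈ s, 0 < b i) :
    (∑ i ∈ s, a i) * log ((∑ i ∈ s, a i) / ∑ i ∈ s, b i) ≤
      ∑ i ∈ s, a i * log (a i / b i) := by
  rcases s.eq_empty_or_nonempty with rfl | hs
  · simp
  set B := ∑ i ∈ s, b i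
  have hB : 0 < B := sum_pos hb hs
  have hjensen := convexOn_mul_log.map_sum_le (t := s) (w := fun i => b i / B)
    (p := fun i => a i / b i) (fun i hi => div_nonneg (hb i hi).le hB.le)
    (by rw [← sum_div, div_self hB.ne']) (fun i hi => div_nonneg (ha i hi) (hb i hi).le)
  have hmean : ∑ i ∈ s, b i / B * (a i / b i) = (∑ i ∈ s, a i) / B := by
    rw [sum_div]
    exact sum_congr rfl fun i hi => by field_simp [(hb i hi).ne']
  have hterm : ∀ i ∈ s, b i / B * (a i / b i * log (a i / b i)) = a i * log (a i / b i) / B :=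
    fun i hi => by field_simp [(hb i hi).ne']
  simp only [smul_eq_mul, hmean, sum_congr rfl hterm, ← sum_div] at hjensen
  rwa [div_mul_eq_mul_div, div_le_div_iff_of_pos_right hB] at hjensen

end Real

theorem abs_log_sub_log_le {a b l u : ℝ} (hl : 0 < l) (ha : a ∈ Set.Icc l u)
    (hb : b ∈ Set.Icc l u) : |Real.log a - Real.log b| ≤ Real.log (u / l) := by
  have hu : 0 < u := hl.trans_le (ha.1.trans ha.2)
  have mono : ∀ x ∈ Set.Icc l u, Real.log l ≤ Real.log x ∧ Real.log x ≤ Real.log u :=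
    fun x hx => ⟨Real.log_le_log hl hx.1, Real.log_le_log (hl.trans_le hx.1) hx.2⟩
  rw [Real.log_div hu.ne' hl.ne', abs_le]
  constructor <;> linarith [mono a ha, mono b hb]

theorem mul_log_div_le_of_log_bounds {G q p a L : ℝ} (hG : 0 ≤ G) (hq : 0 < q) (hp : 0 < p)
    (ha : 0 < G → Real.log (G / q) ≤ a) (hL : |Real.log p - Real.log q| ≤ L) :
    G * Real.log (G / p) ≤ q * Real.log (q / p) + G * a + |q - G| * L := by
  have hsplit : G * Real.log (G / p) = G * Real.log (G / q) + G * (Real.log q - Real.log p) := by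
    rcases hG.eq_or_lt with rfl | hG
    · simp
    · rw [Real.log_div hG.ne' hp.ne', Real.log_div hG.ne' hq.ne']
      ring
  have hfirst : G * Real.log (G / q) ≤ G * a := by
    rcases hG.eq_or_lt with rfl | hG
    · simp
    · exact mul_le_mul_of_nonneg_left (ha hG) hG.le
  have hcross : (G - q) * (Real.log q - Real.log p) ≤ |q - G| * L :=
    calc (G - q) * (Real.log q - Real.log p) ≤ |q - G| * |Real.log p - Real.log q| := by
          rw [abs_sub_comm q G, abs_sub_comm (Real.log p), ← abs_mul]
          exact le_abs_self _
      _ ≤ |q - G| * L := mul_le_mul_of_nonneg_left hL (abs_nonneg _)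
  rw [hsplit, Real.log_div hq.ne' hp.ne']
  linarith

theorem nat_mul_log_div_sub_one_le {T : ℕ} (hT : 2 ≤ T) {K : ℝ} (hK : 2 ≤ K) :
    T * Real.log (T / (T - 1)) ≤ Real.log (K * T) := by
  have hT' : (2 : ℝ) ≤ T := by exact_mod_cast hT
  rcases hT.eq_or_lt with rfl | hT3
  · have h4 : Real.log 4 = 2 * Real.log 2 := by
      rw [show (4 : ℝ) = 2 ^ 2 by norm_num, Real.log_pow, Nat.cast_ofNat]
    norm_num
    rw [← h4]
    exact Real.log_le_log (by norm_num) (by linarith)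
  · have hT3' : (3 : ℝ) ≤ T := by exact_mod_cast hT3
    have hratio : 0 < (T : ℝ) / (T - 1) := div_pos (by linarith) (by linarith)
    -- `T log (T / (T - 1)) ≤ T / (T - 1) ≤ 3 / 2 < log 6 ≤ log (K T)`
    have hlog : T * Real.log (T / (T - 1)) ≤ 3 / 2 :=
      calc T * Real.log (T / (T - 1)) ≤ T * (T / (T - 1) - 1) :=
            mul_le_mul_of_nonneg_left (Real.log_le_sub_one_of_pos hratio) (by linarith)
        _ = T / (T - 1) := by field_simp [show (T : ℝ) - 1 ≠ 0 by linarith]; ring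
        _ ≤ 3 / 2 := by rw [div_le_iff₀ (by linarith)]; linarith
    have hlog3 : 1 < Real.log 3 := by
      rw [Real.lt_log_iff_exp_lt (by norm_num)]
      linarith [Real.exp_one_lt_d9]
    have hlog6 : Real.log 6 ≤ Real.log (K * T) :=
      Real.log_le_log (by norm_num) (by nlinarith)
    rw [show (6 : ℝ) = 2 * 3 by norm_num, Real.log_mul (by norm_num) (by norm_num)] at hlog6
    linarith [Real.log_two_gt_d9]

theorem log_div_le_log_mul_div {T : ℕ} (hT : 1 ≤ T) {K : ℝ} (hK : 2 ≤ K) {G q : ℝ}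
    (hG : 0 < G) (hqT : (1 - 1 / T) * G ≤ q) (hqK : G / (K * T) ≤ q) :
    Real.log (G / q) ≤ Real.log (K * T) / T := by
  have hT' : (1 : ℝ) ≤ T := by exact_mod_cast hT
  have hq : 0 < q := lt_of_lt_of_le (by positivity) hqK
  rcases hT.eq_or_lt with rfl | hT2
  · rw [Nat.cast_one, div_one]
    refine Real.log_le_log (div_pos hG hq) ?_
    rw [div_le_iff₀ hq]
    rw [Nat.cast_one, mul_one, div_le_iff₀ (by linarith)] at hqK
    linarith
  · have hT2' : (2 : ℝ) ≤ T := by exact_mod_cast hT2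
    rw [le_div_iff₀ (by linarith), mul_comm]
    refine le_trans (mul_le_mul_of_nonneg_left (Real.log_le_log (div_pos hG hq) ?_) (by linarith))
      (nat_mul_log_div_sub_one_le hT2 hK)
    rw [div_le_iff₀ hq]
    calc G = T / (T - 1) * ((1 - 1 / T) * G) := by
          field_simp [show (T : ℝ) - 1 ≠ 0 by linarith]
      _ ≤ T / (T - 1) * q := mul_le_mul_of_nonneg_left hqT (div_nonneg (by linarith) (by linarith))

theorem one_sub_le_one_sub_div_pow {n : ℕ} (hn : 0 < n) {x : ℝ} (hx : x ≤ 2 * n) :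
    1 - x ≤ (1 - x / n) ^ n := by
  have hn' : (0 : ℝ) < n := Nat.cast_pos.2 hn
  have h := one_add_mul_le_pow (a := -(x / n)) (by rw [neg_le_neg_iff, div_le_iff₀ hn']; linarith) n
  rwa [mul_neg, mul_div_cancel₀ _ hn'.ne', ← sub_eq_add_neg, ← sub_eq_add_neg] at h

theorem sum_mul_mem_Icc {ι : Type*} [Fintype ι] {p f : ι → ℝ} (hp0 : ∀ j, 0 ≤ p j)
    (hp1 : ∑ j, p j = 1) {l u : ℝ} (hf : ∀ j, f j ∈ Set.Icc l u) :
    ∑ j, p j * f j ∈ Set.Icc l u := by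
  constructor
  · calc l = ∑ j, p j * l := by rw [← sum_mul, hp1, one_mul]
      _ ≤ ∑ j, p j * f j := sum_le_sum fun j _ => mul_le_mul_of_nonneg_left (hf j).1 (hp0 j)
  · calc ∑ j, p j * f j ≤ ∑ j, p j * u :=
          sum_le_sum fun j _ => mul_le_mul_of_nonneg_left (hf j).2 (hp0 j)
      _ = u := by rw [← sum_mul, hp1, one_mul]

theorem log_div_add_mul_div_two_eq_sqrt {L T : ℝ} (hL : 0 < L) (hT : 0 < T) :
    L / Real.sqrt (2 * L / T) + T * Real.sqrt (2 * L / T) / 2 = Real.sqrt (2 * T * L) := by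
  set s := Real.sqrt (2 * L / T)
  have hs : s ^ 2 = 2 * L / T := Real.sq_sqrt (by positivity)
  have hs0 : 0 < s := Real.sqrt_pos.2 (by positivity)
  have hTs : Real.sqrt (2 * T * L) = T * s := by
    rw [← Real.sqrt_sq (by positivity : 0 ≤ T * s), mul_pow, hs]
    congr 1
    field_simp
  rw [hTs]
  field_simp
  rw [hs]
  field_simp
  ring

theorem neg_mul_log_add_mem_Icc {T K M : ℝ} (hT : 0 < T) (hK : 0 < K) (hM : 0 < M) {p Λ c' c : ℝ}
    (hp : p ∈ Set.Icc (1 / (T * K * M)) (1 / M)) (hΛ : |Λ| ≤ c')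
    (hc : c = 1 / (Real.log (K * T) + 2 * c')) :
    -c * (Real.log p + Λ + Real.log M - c') ∈ Set.Icc (0 : ℝ) 1 := by
  have hp0 : 0 < p := (one_div_pos.2 (by positivity)).trans_le hp.1
  have hup : Real.log p + Real.log M ≤ 0 := by
    have := Real.log_le_log hp0 hp.2
    rw [one_div, Real.log_inv] at this
    linarith
  have hlow : -Real.log (K * T) ≤ Real.log p + Real.log M := by
    have := Real.log_le_log (by positivity) hp.1
    rw [one_div, Real.log_inv, Real.log_mul (by positivity) hM.ne', mul_comm T K] at this
    linarith
  obtain ⟨hΛl, hΛu⟩ := abs_le.1 hΛ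
  rw [hc, show ∀ D x : ℝ, -(1 / D) * x = -x / D from fun D x => by ring]
  exact ⟨div_nonneg (by linarith) (by linarith), div_le_one_of_le₀ (by linarith) (by linarith)⟩

instance (b : ℝ) : SigmaFinite (laplaceMeasure b) := by
  unfold laplaceMeasure; infer_instance

theorem laplaceMeasure_Icc {b : ℝ} (hb : 0 < b) {a : ℝ} (ha : 0 ≤ a) :
    laplaceMeasure b (Set.Icc (-a) a) = ENNReal.ofReal (1 - Real.exp (-a / b)) := by
  set f : ℝ → ℝ := fun x => 1 / (2 * b) * Real.exp (-|x| / b)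
  have hf : Continuous f := by fun_prop
  rw [laplaceMeasure, withDensity_apply _ measurableSet_Icc,
    ← ofReal_integral_eq_lintegral_ofReal hf.integrableOn_Icc
      (Filter.Eventually.of_forall fun x => by positivity),
    integral_Icc_eq_integral_Ioc, ← intervalIntegral.integral_of_le (by linarith),
    ← intervalIntegral.integral_add_adjacent_intervals (b := 0)
      (hf.intervalIntegrable _ _) (hf.intervalIntegrable _ _)]
  -- `f` is even, so both halves equal `∫ x in 0..a, f x = (1 - exp (-a / b)) / 2`
  have hsymm : ∫ x in -a..0, f x = ∫ x in 0..a, f x := by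
    simpa [f] using (intervalIntegral.integral_comp_neg (a := 0) (b := a) f).symm
  have hderiv : ∀ x, HasDerivAt (fun y => -(1 / 2) * Real.exp (-y / b))
      (1 / (2 * b) * Real.exp (-x / b)) x := fun x => by
    have h := ((hasDerivAt_neg x).div_const b).exp.const_mul (-(1 / 2) : ℝ)
    refine h.congr_deriv ?_
    field_simp
  have hhalf : ∫ x in 0..a, f x = (1 - Real.exp (-a / b)) / 2 := by
    rw [intervalIntegral.integral_congr (g := fun x => 1 / (2 * b) * Real.exp (-x / b))
      fun x hx => by simp [f, abs_of_nonneg (Set.uIcc_of_le ha ▸ hx).1],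
      intervalIntegral.integral_eq_sub_of_hasDerivAt (fun x _ => hderiv x)
        ((by fun_prop : Continuous fun x : ℝ => 1 / (2 * b) * Real.exp (-x / b)).intervalIntegrable
          _ _)]
    simp only [neg_zero, zero_div, Real.exp_zero]
    ring
  rw [hsymm, hhalf]
  ring_nf

theorem laplaceMeasure_pi_abs_le {ι : Type*} [Fintype ι] {b : ℝ} (hb : 0 < b) {a : ℝ}
    (ha : 0 ≤ a) :
    Measure.pi (fun _ : ι => laplaceMeasure b) {L | ∀ i, |L i| ≤ a} =
      ENNReal.ofReal ((1 - Real.exp (-a / b)) ^ Fintype.card ι) := by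
  have hset : {L : ι → ℝ | ∀ i, |L i| ≤ a} = Set.univ.pi fun _ => Set.Icc (-a) a := by
    ext L
    simp only [Set.mem_ofPred_eq, Set.mem_univ_pi, Set.mem_Icc, abs_le]
  rw [hset, Measure.pi_pi, laplaceMeasure_Icc hb ha, prod_const, card_univ,
    ENNReal.ofReal_pow (sub_nonneg.2 (Real.exp_le_one_iff.2 (by
      rw [neg_div]; exact neg_nonpos.2 (div_nonneg ha hb.le))))]

theorem laplace_noise_bounded {T K : ℕ} (hT : 1 ≤ T) (hK : 1 ≤ K) {b γ : ℝ} (hb : 0 < b)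
    (hγ : 0 ≤ γ) :
    1 - ENNReal.ofReal (Real.exp (-γ)) ≤
      Measure.pi (fun _ : Fin T × Fin K => laplaceMeasure b)
        {L | ∀ p, |L p| ≤ b * (γ + Real.log K + Real.log T)} := by
  have hK' : (1 : ℝ) ≤ K := Nat.one_le_cast.2 hK
  have hT' : (1 : ℝ) ≤ T := Nat.one_le_cast.2 hT
  have hlogK := Real.log_nonneg hK'
  have hlogT := Real.log_nonneg hT'
  rw [laplaceMeasure_pi_abs_le hb (by positivity), Fintype.card_prod, Fintype.card_fin,
    Fintype.card_fin, ← ENNReal.ofReal_one, ← ENNReal.ofReal_sub _ (Real.exp_pos _).le]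
  refine ENNReal.ofReal_le_ofReal ?_
  have htail : Real.exp (-(b * (γ + Real.log K + Real.log T)) / b) =
      Real.exp (-γ) / ((T * K : ℕ) : ℝ) := by
    rw [neg_div, mul_div_cancel_left₀ _ hb.ne', neg_add, neg_add, Real.exp_add, Real.exp_add,
      Real.exp_neg (Real.log _), Real.exp_neg (Real.log _), Real.exp_log (by linarith),
      Real.exp_log (by linarith)]
    push_cast
    field_simp
  rw [htail]
  refine one_sub_le_one_sub_div_pow (Nat.mul_pos hT hK) ?_
  have : Real.exp (-γ) ≤ 1 := Real.exp_le_one_iff.2 (by linarith)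
  have : (1 : ℝ) ≤ ((T * K : ℕ) : ℝ) := by push_cast; nlinarith
  linarith

theorem weights_pos {ι : Type*} {T : ℕ} {w : ℕ → ι → ℝ} (hw0 : ∀ j, w 0 j = 1) {φ : Fin T → ι → ℝ}
    (hφ : ∀ t j, 0 < φ t j) (hrec : ∀ (t : Fin T) j, w (t.1 + 1) j = w t.1 j * φ t j) :
    ∀ n ≤ T, ∀ j, 0 < w n j := by
  intro n hn
  induction n with
  | zero => simp [hw0]
  | succ n ih =>
    intro j
    rw [hrec ⟨n, hn⟩ j]
    exact mul_pos (ih (by omega) j) (hφ _ j)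

section Hedge

variable {ι : Type*} [Fintype ι]

theorem log_sum_mul_exp_neg_le {p x : ι → ℝ} (hp : ∀ j, 0 ≤ p j) (hp1 : ∑ j, p j = 1)
    (hx : ∀ j, x j ∈ Set.Icc (0 : ℝ) 1) {η : ℝ} (hη : 0 ≤ η) :
    Real.log (∑ j, p j * Real.exp (-η * x j)) ≤ -η * ∑ j, p j * x j + η ^ 2 / 2 := by
  have hexp : ∀ j, Real.exp (-η * x j) ≤ 1 - η * x j + η ^ 2 / 2 := fun j => by
    have hsq : (η * x j) ^ 2 ≤ η ^ 2 := by
      rw [mul_pow]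
      exact mul_le_of_le_one_right (sq_nonneg η)
        (pow_le_one₀ (hx j).1 (hx j).2)
    rw [neg_mul]
    linarith [Real.exp_neg_le_one_sub_add_sq_div_two_s9 (mul_nonneg hη (hx j).1)]
  have hmean : ∑ j, p j * Real.exp (-η * x j) ≤ 1 - η * ∑ j, p j * x j + η ^ 2 / 2 :=
    calc ∑ j, p j * Real.exp (-η * x j) ≤ ∑ j, p j * (1 - η * x j + η ^ 2 / 2) :=
          sum_le_sum fun j _ => mul_le_mul_of_nonneg_left (hexp j) (hp j)
      _ = (∑ j, p j) * (1 + η ^ 2 / 2) - η * ∑ j, p j * x j := by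
          rw [sum_mul, mul_sum, ← sum_sub_distrib]
          exact sum_congr rfl fun j _ => by ring
      _ = 1 - η * ∑ j, p j * x j + η ^ 2 / 2 := by rw [hp1]; ring
  have hpos : 0 < ∑ j, p j * Real.exp (-η * x j) := by
    obtain ⟨j, hj⟩ : ∃ j, p j ≠ 0 := by
      by_contra! h
      simp [h] at hp1
    exact lt_of_lt_of_le (mul_pos ((hp j).lt_of_ne' hj) (Real.exp_pos _))
      (single_le_sum (fun i _ => mul_nonneg (hp i) (Real.exp_pos _).le) (mem_univ j))
  linarith [Real.log_le_sub_one_of_pos hpos]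

theorem Fin.sum_univ_sub_eq_sub {T : ℕ} (f : ℕ → ℝ) :
    ∑ t : Fin T, (f (t.1 + 1) - f t.1) = f T - f 0 := by
  rw [Fin.sum_univ_eq_sum_range (fun n => f (n + 1) - f n), sum_range_sub]

theorem hedge_regret_le [Nonempty ι] {T : ℕ} {η : ℝ} (hη : 0 < η) (ℓ : Fin T → ι → ℝ)
    (hℓ : ∀ t j, ℓ t j ∈ Set.Icc (0 : ℝ) 1) {w : ℕ → ι → ℝ} (hw0 : ∀ j, w 0 j = 1)
    (hrec : ∀ (t : Fin T) j, w (t.1 + 1) j = w t.1 j * Real.exp (-η * ℓ t j)) (jstar : ι) :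
    ∑ t : Fin T, ∑ j, (w t.1 j / ∑ i, w t.1 i) * ℓ t j ≤
      ∑ t, ℓ t jstar + (Real.log (Fintype.card ι) / η + T * η / 2) := by
  have hpos := weights_pos hw0 (fun t j => Real.exp_pos _) hrec
  have hZ : ∀ n ≤ T, 0 < ∑ i, w n i := fun n hn =>
    sum_pos (fun i _ => hpos n hn i) univ_nonempty
  have hstep : ∀ t : Fin T, Real.log (∑ j, w (t.1 + 1) j) - Real.log (∑ j, w t.1 j) ≤
      -η * ∑ j, (w t.1 j / ∑ i, w t.1 i) * ℓ t j + η ^ 2 / 2 := fun t => by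
    have hZt := hZ t.1 t.2.le
    have hfactor : ∑ j, w (t.1 + 1) j =
        (∑ i, w t.1 i) * ∑ j, (w t.1 j / ∑ i, w t.1 i) * Real.exp (-η * ℓ t j) := by
      rw [mul_sum]
      exact sum_congr rfl fun j _ => by rw [hrec]; field_simp
    have hmix : 0 < ∑ j, (w t.1 j / ∑ i, w t.1 i) * Real.exp (-η * ℓ t j) :=
      sum_pos (fun j _ => mul_pos (div_pos (hpos _ t.2.le j) hZt) (Real.exp_pos _)) univ_nonempty
    rw [hfactor, Real.log_mul hZt.ne' hmix.ne', add_sub_cancel_left]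
    exact log_sum_mul_exp_neg_le (fun j => div_nonneg (hpos _ t.2.le j).le hZt.le)
      (by rw [← sum_div, div_self hZt.ne']) (hℓ t) hη.le
  have hupper := sum_le_sum (s := univ) fun t _ => hstep t
  have hlower : ∑ t : Fin T, (Real.log (w (t.1 + 1) jstar) - Real.log (w t.1 jstar)) =
      ∑ t : Fin T, -η * ℓ t jstar := sum_congr rfl fun t _ => by
    rw [hrec, Real.log_mul (hpos _ t.2.le jstar).ne' (Real.exp_pos _).ne', Real.log_exp,
      add_sub_cancel_left]
  rw [Fin.sum_univ_sub_eq_sub (fun n => Real.log (∑ j, w n j))] at hupper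
  rw [Fin.sum_univ_sub_eq_sub (fun n => Real.log (w n jstar))] at hlower
  simp only [hw0, sum_const, card_univ, nsmul_eq_mul, mul_one, Real.log_one, sub_zero,
    sum_add_distrib, ← mul_sum, Fintype.card_fin] at hupper hlower
  have hwT : Real.log (w T jstar) ≤ Real.log (∑ j, w T j) :=
    Real.log_le_log (hpos T le_rfl jstar)
      (single_le_sum (fun j _ => (hpos T le_rfl j).le) (mem_univ jstar))
  have key : η * ∑ t : Fin T, ∑ j, (w t.1 j / ∑ i, w t.1 i) * ℓ t j ≤
      η * (∑ t, ℓ t jstar + (Real.log (Fintype.card ι) / η + T * η / 2)) := by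
    rw [mul_add, mul_add, mul_div_cancel₀ _ hη.ne']
    nlinarith
  exact le_of_mul_le_mul_left key hη

theorem sum_log_div_mixture_le [Nonempty ι] {T : ℕ} {η c : ℝ} (hη : 0 < η) (hc : 0 < c)
    {P : Fin T → ι → ℝ} (hP : ∀ t j, 0 < P t j) (Λ ℓ : Fin T → ι → ℝ) (a : Fin T → ℝ)
    (hℓ : ∀ t j, ℓ t j = a t - c * (Real.log (P t j) + Λ t j))
    (hℓI : ∀ t j, ℓ t j ∈ Set.Icc (0 : ℝ) 1) {w : ℕ → ι → ℝ} (hw0 : ∀ j, w 0 j = 1)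
    (hrec : ∀ (t : Fin T) j, w (t.1 + 1) j = w t.1 j * Real.exp (-η * ℓ t j)) (jstar : ι) :
    ∑ t, Real.log (P t jstar / ∑ j, (w t.1 j / ∑ i, w t.1 i) * P t j) ≤
      (Real.log (Fintype.card ι) / η + T * η / 2) / c +
        ∑ t, ∑ j, (w t.1 j / ∑ i, w t.1 i) * Λ t j - ∑ t, Λ t jstar := by
  have hpos := weights_pos hw0 (fun t j => Real.exp_pos _) hrec
  set p : Fin T → ι → ℝ := fun t j => w t.1 j / ∑ i, w t.1 i
  have hZ : ∀ t : Fin T, 0 < ∑ i, w t.1 i := fun t =>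
    sum_pos (fun i _ => hpos _ t.2.le i) univ_nonempty
  have hp0 : ∀ t j, 0 ≤ p t j := fun t j => div_nonneg (hpos _ t.2.le j).le (hZ t).le
  have hp1 : ∀ t, ∑ j, p t j = 1 := fun t => by simp only [p, ← sum_div, div_self (hZ t).ne']
  have hjensen : ∀ t, ∑ j, p t j * Real.log (P t j) ≤ Real.log (∑ j, p t j * P t j) := fun t => by
    simpa using strictConcaveOn_log_Ioi.concaveOn.le_map_sum (fun j _ => hp0 t j) (hp1 t)
      fun j _ => hP t j
  have hmix : ∀ t, 0 < ∑ j, p t j * P t j := fun t => by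
    obtain ⟨j, hj⟩ : ∃ j, p t j ≠ 0 := by
      by_contra! h
      simpa [h] using hp1 t
    exact (mul_pos ((hp0 t j).lt_of_ne' hj) (hP t j)).trans_le
      (single_le_sum (fun i _ => mul_nonneg (hp0 t i) (hP t i).le) (mem_univ j))
  have havg : ∀ t, ∑ j, p t j * ℓ t j =
      a t - c * (∑ j, p t j * Real.log (P t j) + ∑ j, p t j * Λ t j) := fun t => by
    simp only [hℓ, mul_sub, mul_add, sum_sub_distrib, sum_add_distrib, ← sum_mul, hp1, one_mul,
      mul_left_comm (p t _) c, ← mul_sum]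
  have hreg : ∑ t, ∑ j, p t j * ℓ t j ≤ ∑ t, ℓ t jstar + _ :=
    hedge_regret_le hη ℓ hℓI hw0 hrec jstar
  rw [sum_congr rfl fun t _ => havg t] at hreg
  simp only [hℓ, sum_sub_distrib, ← mul_sum, sum_add_distrib] at hreg
  have hlog : ∀ t, Real.log (P t jstar / ∑ j, p t j * P t j) ≤
      Real.log (P t jstar) - ∑ j, p t j * Real.log (P t j) := fun t => by
    rw [Real.log_div (hP t jstar).ne' (hmix t).ne']
    linarith [hjensen t]
  have hsum := sum_le_sum (s := univ) fun t _ => hlog t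
  rw [sum_sub_distrib] at hsum
  change ∑ t, Real.log (P t jstar / ∑ j, p t j * P t j) ≤ _ / c + ∑ t, ∑ j, p t j * Λ t j - _
  refine le_of_mul_le_mul_left ?_ hc
  rw [mul_sub, mul_add, mul_div_cancel₀ _ hc.ne']
  nlinarith

end Hedge

noncomputable def kl {ι : Type*} [Fintype ι] (p q : ι → ℝ) : ℝ :=
  ∑ i, p i * Real.log (p i / q i)

theorem mul_log_div_sum_le {β : Type*} {s : Finset β} {T : ℕ} (hT : 1 ≤ T) {K M : ℝ}
    (hK : 2 ≤ K) (hM : 0 < M) {G : ℝ} (hG : 0 ≤ G) (hGs : M * G ≤ #s) {q p : β → ℝ}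
    (hqG : (1 - 1 / T) * G ≤ ∑ v ∈ s, q v)
    (hq : ∀ v ∈ s, q v ∈ Set.Icc (1 / (T * K * M)) (1 / M))
    (hp : ∀ v ∈ s, p v ∈ Set.Icc (1 / (T * K * M)) (1 / M)) :
    G * Real.log (G / ∑ v ∈ s, p v) ≤
      (∑ v ∈ s, q v) * Real.log ((∑ v ∈ s, q v) / ∑ v ∈ s, p v) +
        G * (Real.log (K * T) / T) + |∑ v ∈ s, q v - G| * Real.log (K * T) := by
  have hT' : (0 : ℝ) < T := by exact_mod_cast hT
  have hK' : (0 : ℝ) < K := by linarith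
  have hl : (0 : ℝ) < 1 / (T * K * M) := one_div_pos.2 (by positivity)
  rcases s.eq_empty_or_nonempty with rfl | hs
  · obtain rfl : G = 0 := le_antisymm (nonpos_of_mul_nonpos_right (by simpa using hGs) hM) hG
    simp
  have hn : (0 : ℝ) < #s := by exact_mod_cast hs.card_pos
  have hblock : ∀ f : β → ℝ, (∀ v ∈ s, f v ∈ Set.Icc (1 / (T * K * M)) (1 / M)) →
      ∑ v ∈ s, f v ∈ Set.Icc (#s * (1 / (T * K * M))) (#s * (1 / M)) := fun f hf => by
    simpa [nsmul_eq_mul] using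
      And.intro (card_nsmul_le_sum s f _ fun v hv => (hf v hv).1)
        (sum_le_card_nsmul s f _ fun v hv => (hf v hv).2)
  have hlow : 0 < #s * (1 / (T * K * M)) := mul_pos hn hl
  refine mul_log_div_le_of_log_bounds hG (hlow.trans_le (hblock q hq).1)
    (hlow.trans_le (hblock p hp).1) (fun hGpos => ?_) ?_
  · refine log_div_le_log_mul_div hT hK hGpos hqG (le_trans ?_ (hblock q hq).1)
    calc G / (K * T) = M * G * (1 / (T * K * M)) := by field_simp
      _ ≤ #s * (1 / (T * K * M)) := mul_le_mul_of_nonneg_right hGs hl.le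
  · convert abs_log_sub_log_le hlow (hblock p hp) (hblock q hq) using 2
    field_simp

section Clipping

variable {α β : Type*} [Fintype α] [Fintype β] {S : α → Finset β}

theorem sum_eq_sum_sum_of_partition [DecidableEq β]
    (hdisj : ∀ y y', y ≠ y' → Disjoint (S y) (S y')) (hcover : ∀ v, ∃ y, v ∈ S y)
    (f : β → ℝ) : ∑ v, f v = ∑ y, ∑ v ∈ S y, f v := by
  rw [← sum_biUnion fun y _ y' _ h => hdisj y y' h]
  exact sum_congr (eq_univ_of_forall fun v => by simpa using hcover v).symm fun _ _ => rfl

theorem sum_clipped_block {T : ℕ} {M : ℝ} (hM : 0 < M) {G : ℝ} (hG : 0 ≤ G) {s : Finset β}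
    (hGs : M * G ≤ #s) {q : β → ℝ}
    (hq : ∀ v ∈ s, q v = (1 - 1 / (T : ℝ)) * G / #s + 1 / ((T : ℝ) * Fintype.card β)) :
    ∑ v ∈ s, q v = (1 - 1 / (T : ℝ)) * G + #s / ((T : ℝ) * Fintype.card β) := by
  rcases s.eq_empty_or_nonempty with rfl | hs
  · obtain rfl : G = 0 := le_antisymm (nonpos_of_mul_nonpos_right (by simpa using hGs) hM) hG
    simp
  have hn : (#s : ℝ) ≠ 0 := by exact_mod_cast hs.card_pos.ne'
  rw [sum_congr rfl hq, sum_const, nsmul_eq_mul]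
  field_simp

theorem card_eq_sum_card_of_partition [DecidableEq β]
    (hdisj : ∀ y y', y ≠ y' → Disjoint (S y) (S y')) (hcover : ∀ v, ∃ y, v ∈ S y) :
    (Fintype.card β : ℝ) = ∑ y, (#(S y) : ℝ) := by
  simpa using sum_eq_sum_sum_of_partition hdisj hcover fun _ => (1 : ℝ)

theorem card_pos_of_clipping [DecidableEq β] (hdisj : ∀ y y', y ≠ y' → Disjoint (S y) (S y'))
    (hcover : ∀ v, ∃ y, v ∈ S y) {M : ℝ} (hM : 0 < M) {G : α → ℝ} (hG1 : ∑ y, G y = 1)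
    (hGS : ∀ y, M * G y ≤ #(S y)) : (0 : ℝ) < Fintype.card β :=
  calc (0 : ℝ) < M * ∑ y, G y := by rw [hG1, mul_one]; exact hM
    _ ≤ Fintype.card β := by
      rw [card_eq_sum_card_of_partition hdisj hcover, mul_sum]
      exact sum_le_sum fun y _ => hGS y

theorem sum_clipped_eq_one [DecidableEq β] (hdisj : ∀ y y', y ≠ y' → Disjoint (S y) (S y'))
    (hcover : ∀ v, ∃ y, v ∈ S y) {T : ℕ} {M : ℝ} (hM : 0 < M) {G : α → ℝ} (hG0 : ∀ y, 0 ≤ G y)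
    (hG1 : ∑ y, G y = 1) (hGS : ∀ y, M * G y ≤ #(S y)) {q : β → ℝ}
    (hq : ∀ y, ∀ v ∈ S y,
      q v = (1 - 1 / (T : ℝ)) * G y / #(S y) + 1 / ((T : ℝ) * Fintype.card β)) :
    ∑ v, q v = 1 := by
  have hcard := card_pos_of_clipping hdisj hcover hM hG1 hGS
  rw [sum_eq_sum_sum_of_partition hdisj hcover,
    sum_congr rfl fun y _ => sum_clipped_block hM (hG0 y) (hGS y) (hq y), sum_add_distrib,
    ← mul_sum, hG1, ← sum_div, ← card_eq_sum_card_of_partition hdisj hcover]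
  rcases Nat.eq_zero_or_pos T with rfl | hT
  · simp
  · field_simp
    ring

theorem sum_abs_sum_clipped_sub_le [DecidableEq β]
    (hdisj : ∀ y y', y ≠ y' → Disjoint (S y) (S y')) (hcover : ∀ v, ∃ y, v ∈ S y) {T : ℕ}
    (hT : 1 ≤ T) {M : ℝ} (hM : 0 < M) {G : α → ℝ} (hG0 : ∀ y, 0 ≤ G y) (hG1 : ∑ y, G y = 1)
    (hGS : ∀ y, M * G y ≤ #(S y)) {q : β → ℝ}
    (hq : ∀ y, ∀ v ∈ S y,
      q v = (1 - 1 / (T : ℝ)) * G y / #(S y) + 1 / ((T : ℝ) * Fintype.card β)) :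
    ∑ y, |∑ v ∈ S y, q v - G y| ≤ 2 / T := by
  have hT' : (0 : ℝ) < T := by exact_mod_cast hT
  have hcard := card_pos_of_clipping hdisj hcover hM hG1 hGS
  calc ∑ y, |∑ v ∈ S y, q v - G y|
      ≤ ∑ y, ((#(S y) : ℝ) / (T * Fintype.card β) + G y / T) := sum_le_sum fun y _ => by
        rw [sum_clipped_block hM (hG0 y) (hGS y) (hq y),
          show (1 - 1 / (T : ℝ)) * G y + #(S y) / (T * Fintype.card β) - G y =
            #(S y) / (T * Fintype.card β) - G y / T by ring]
        exact (abs_sub _ _).trans_eq (by rw [abs_of_nonneg (by positivity),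
          abs_of_nonneg (div_nonneg (hG0 y) hT'.le)])
    _ = 2 / T := by
        rw [sum_add_distrib, ← sum_div, ← sum_div, hG1,
          ← card_eq_sum_card_of_partition hdisj hcover]
        field_simp
        ring

theorem kl_blockSum_le [DecidableEq β] (hdisj : ∀ y y', y ≠ y' → Disjoint (S y) (S y'))
    (hcover : ∀ v, ∃ y, v ∈ S y) {T : ℕ} (hT : 1 ≤ T) {K M : ℝ} (hK : 2 ≤ K) (hM : 0 < M)
    {G : α → ℝ} (hG0 : ∀ y, 0 ≤ G y) (hG1 : ∑ y, G y = 1) (hGS : ∀ y, M * G y ≤ #(S y))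
    {q p : β → ℝ}
    (hq : ∀ y, ∀ v ∈ S y,
      q v = (1 - 1 / (T : ℝ)) * G y / #(S y) + 1 / ((T : ℝ) * Fintype.card β))
    (hqI : ∀ v, q v ∈ Set.Icc (1 / (T * K * M)) (1 / M))
    (hpI : ∀ v, p v ∈ Set.Icc (1 / (T * K * M)) (1 / M)) :
    kl G (fun y => ∑ v ∈ S y, p v) ≤ kl q p + 3 * Real.log (K * T) / T := by
  have hblock y := sum_clipped_block hM (hG0 y) (hGS y) (hq y)
  have hper y := mul_log_div_sum_le hT hK hM (hG0 y) (hGS y)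
    (by rw [hblock y]; exact le_add_of_nonneg_right (by positivity)) (fun v _ => hqI v)
    (fun v _ => hpI v)
  have hlogsum : ∑ y, (∑ v ∈ S y, q v) * Real.log ((∑ v ∈ S y, q v) / ∑ v ∈ S y, p v) ≤
      kl q p := by
    rw [kl, sum_eq_sum_sum_of_partition hdisj hcover]
    refine sum_le_sum fun y _ => Real.mul_log_div_le_sum_mul_log_div _ ?_ ?_
    · exact fun v _ => (one_div_pos.2 (by positivity)).le.trans (hqI v).1
    · exact fun v _ => (one_div_pos.2 (by positivity)).trans_le (hpI v).1
  have htv := sum_abs_sum_clipped_sub_le hdisj hcover hT hM hG0 hG1 hGS hq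
  calc kl G (fun y => ∑ v ∈ S y, p v)
      ≤ ∑ y, ((∑ v ∈ S y, q v) * Real.log ((∑ v ∈ S y, q v) / ∑ v ∈ S y, p v) +
          G y * (Real.log (K * T) / T) + |∑ v ∈ S y, q v - G y| * Real.log (K * T)) :=
        sum_le_sum fun y _ => hper y
    _ ≤ kl q p + Real.log (K * T) / T + 2 / T * Real.log (K * T) := by
        rw [sum_add_distrib, sum_add_distrib, ← sum_mul, ← sum_mul, hG1, one_mul]
        gcongr
        exact Real.log_nonneg (by nlinarith [show (1 : ℝ) ≤ T by exact_mod_cast hT])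
    _ = kl q p + 3 * Real.log (K * T) / T := by ring

end Clipping

section PathMean

variable {ι : Type*} [Fintype ι] [DecidableEq ι] {β : ι → Type*} [∀ i, Fintype (β i)]

noncomputable def pathMean (q : (i : ι) → β i → ℝ) (f : ((i : ι) → β i) → ℝ) : ℝ :=
  ∑ ys, (∏ i, q i (ys i)) * f ys

variable {q : (i : ι) → β i → ℝ}

theorem pathMean_mono (hq : ∀ i v, 0 ≤ q i v) {f g : ((i : ι) → β i) → ℝ}
    (hfg : ∀ ys, f ys ≤ g ys) : pathMean q f ≤ pathMean q g :=
  sum_le_sum fun ys _ => mul_le_mul_of_nonneg_left (hfg ys) (prod_nonneg fun i _ => hq i _)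

theorem pathMean_add_const (hq : ∀ i, ∑ v, q i v = 1)
    (f : ((i : ι) → β i) → ℝ) (a : ℝ) :
    pathMean q (fun ys => f ys + a) = pathMean q f + a := by
  simp only [pathMean, mul_add, sum_add_distrib, ← sum_mul, ← Fintype.prod_sum, hq,
    prod_const_one, one_mul]

theorem pathMean_sum {κ : Type*} (s : Finset κ) (f : κ → ((i : ι) → β i) → ℝ) :
    pathMean q (fun ys => ∑ k ∈ s, f k ys) = ∑ k ∈ s, pathMean q (f k) := by
  simp only [pathMean, mul_sum]
  exact sum_comm

theorem pathMean_mul_const (f : ((i : ι) → β i) → ℝ) (a : ℝ) :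
    pathMean q (fun ys => f ys * a) = pathMean q f * a := by
  simp only [pathMean, sum_mul, mul_assoc]

theorem pathMean_eq_of_update_invariant (hq : ∀ i, ∑ v, q i v = 1) (i : ι)
    (g : ((i : ι) → β i) → β i → ℝ) (hg : ∀ ys u v, g (Function.update ys i u) v = g ys v) :
    pathMean q (fun ys => g ys (ys i)) = pathMean q (fun ys => ∑ v, q i v * g ys v) := by
  -- resampling coordinate `i`: `(ys, v) ↦ (update ys i v, ys i)` is an involution that
  -- preserves the weight `(∏ j, q j (ys j)) * q i v`
  set σ : ((j : ι) → β j) × β i → ((j : ι) → β j) × β i :=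
    fun p => (Function.update p.1 i p.2, p.1 i)
  have hσ : Function.Involutive σ := fun p => by simp [σ]
  have hweight : ∀ ys v, (∏ j, q j (Function.update ys i v j)) * q i (ys i) =
      (∏ j, q j (ys j)) * q i v := fun ys v => by
    rw [Fintype.prod_eq_mul_prod_subtype_ne _ i, Fintype.prod_eq_mul_prod_subtype_ne _ i]
    simp only [Function.update_self]
    rw [prod_congr rfl fun j _ => by rw [Function.update_of_ne j.2]]
    ring
  set F : ((j : ι) → β j) × β i → ℝ := fun p => (∏ j, q j (p.1 j)) * q i p.2 * g p.1 p.2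
  have hF := Equiv.sum_comp (hσ.toPerm σ) F
  simp only [Fintype.sum_prod_type, Function.Involutive.coe_toPerm, F, σ, hweight, hg] at hF
  calc pathMean q (fun ys => g ys (ys i))
      = ∑ ys, ∑ v, (∏ j, q j (ys j)) * q i v * g ys (ys i) :=
        sum_congr rfl fun ys _ => by rw [← sum_mul, ← mul_sum, hq, mul_one]
    _ = ∑ ys, ∑ v, (∏ j, q j (ys j)) * q i v * g ys v := hF
    _ = pathMean q (fun ys => ∑ v, q i v * g ys v) :=
        sum_congr rfl fun ys _ => by simp only [mul_sum, mul_assoc]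

theorem pathMean_sum_kl_eq (hq : ∀ i, ∑ v, q i v = 1)
    (m : ((i : ι) → β i) → (i : ι) → β i → ℝ)
    (hm : ∀ ys i u, m (Function.update ys i u) i = m ys i) :
    pathMean q (fun ys => ∑ i, kl (q i) (m ys i)) =
      pathMean q (fun ys => ∑ i, Real.log (q i (ys i) / m ys i (ys i))) := by
  rw [pathMean_sum, pathMean_sum]
  exact sum_congr rfl fun i _ => (pathMean_eq_of_update_invariant hq i
    (fun ys v => Real.log (q i v / m ys i v)) fun ys u v => by simp only [hm]).symm

end PathMean

theorem weights_update_eq {T : ℕ} {β : Fin T → Type*} {κ : Type*}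
    {w : ((t : Fin T) → β t) → ℕ → κ → ℝ} (hw0 : ∀ ys j, w ys 0 j = 1)
    {φ : (t : Fin T) → κ → β t → ℝ}
    (hrec : ∀ ys (t : Fin T) j, w ys (t.1 + 1) j = w ys t.1 j * φ t j (ys t))
    (ys : (t : Fin T) → β t) (t : Fin T) (u : β t) :
    ∀ n ≤ t.1, w (Function.update ys t u) n = w ys n := by
  intro n hn
  induction n with
  | zero => funext j; simp [hw0]
  | succ n ih =>
    funext j
    have hne : (⟨n, by omega⟩ : Fin T) ≠ t := fun h => by rw [← h] at hn; simp at hn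
    rw [hrec _ ⟨n, by omega⟩, hrec _ ⟨n, by omega⟩, ih (by omega), Function.update_of_ne hne]

section Algorithm

variable {X : Type*} {M K T : ℕ} {F : Fin K → X → Fin M → ℝ} {x : Fin T → X} {N' : Fin T → ℕ}
  {S : (t : Fin T) → Fin M → Finset (Fin (N' t))} {pbar : (t : Fin T) → Fin K → Fin (N' t) → ℝ}

theorem mul_le_card_of_card_eq_ceil
    (hScard : ∀ t y, (S t y).card = ⌈(M : ℝ) * ⨆ j, F j (x t) y⌉₊) (t : Fin T) (j : Fin K)
    (y : Fin M) : (M : ℝ) * F j (x t) y ≤ (S t y).card := by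
  rw [hScard]
  have hsup := le_ciSup (Set.finite_range fun j => F j (x t) y).bddAbove j
  exact le_trans (mul_le_mul_of_nonneg_left hsup (Nat.cast_nonneg M))
    (Nat.le_ceil ((M : ℝ) * ⨆ j, F j (x t) y))

theorem sum_pbar_eq_one (hM : 1 ≤ M) (hF : ∀ j x, IsDist (F j x))
    (hScard : ∀ t y, (S t y).card = ⌈(M : ℝ) * ⨆ j, F j (x t) y⌉₊)
    (hSdisj : ∀ t (y y' : Fin M), y ≠ y' → Disjoint (S t y) (S t y'))
    (hScover : ∀ t (v : Fin (N' t)), ∃ y, v ∈ S t y)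
    (hpbar : ∀ t j y v, v ∈ S t y →
      pbar t j v = (1 - 1 / (T : ℝ)) * F j (x t) y / (S t y).card + 1 / ((T : ℝ) * N' t))
    (t : Fin T) (j : Fin K) : ∑ v, pbar t j v = 1 :=
  sum_clipped_eq_one (hSdisj t) (hScover t) (by exact_mod_cast hM) (hF j (x t)).1 (hF j (x t)).2
    (mul_le_card_of_card_eq_ceil hScard t j)
    (fun y v hv => by rw [Fintype.card_fin]; exact hpbar t j y v hv)

theorem kl_blockSum_mixture_le (hK : 2 ≤ K) (hM : 1 ≤ M) (hT : 1 ≤ T)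
    (hF : ∀ j x, IsDist (F j x))
    (hScard : ∀ t y, (S t y).card = ⌈(M : ℝ) * ⨆ j, F j (x t) y⌉₊)
    (hSdisj : ∀ t (y y' : Fin M), y ≠ y' → Disjoint (S t y) (S t y'))
    (hScover : ∀ t (v : Fin (N' t)), ∃ y, v ∈ S t y)
    (hpbar : ∀ t j y v, v ∈ S t y →
      pbar t j v = (1 - 1 / (T : ℝ)) * F j (x t) y / (S t y).card + 1 / ((T : ℝ) * N' t))
    (hclip : ∀ t j v, 1 / ((T : ℝ) * K * M) ≤ pbar t j v ∧ pbar t j v ≤ 1 / (M : ℝ))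
    (jstar : Fin K) (t : Fin T) {p : Fin K → ℝ} (hp0 : ∀ j, 0 ≤ p j) (hp1 : ∑ j, p j = 1) :
    kl (F jstar (x t)) (fun y => ∑ v ∈ S t y, ∑ j, p j * pbar t j v) ≤
      kl (pbar t jstar) (fun v => ∑ j, p j * pbar t j v) + 3 * Real.log (K * T) / T :=
  kl_blockSum_le (hSdisj t) (hScover t) hT (by exact_mod_cast hK) (by exact_mod_cast hM)
    (hF jstar (x t)).1 (hF jstar (x t)).2 (mul_le_card_of_card_eq_ceil hScard t jstar)
    (fun y v hv => by rw [Fintype.card_fin]; exact hpbar t jstar y v hv) (hclip t jstar)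
    fun v => sum_mul_mem_Icc hp0 hp1 fun j => hclip t j v

theorem sum_log_div_mixture_le_of_clip (hK : 2 ≤ K) (hM : 1 ≤ M) (hT : 1 ≤ T) {c' c η : ℝ}
    (hc : c = 1 / (Real.log ((K : ℝ) * T) + 2 * c')) (hη : η = Real.sqrt (2 * Real.log K / T))
    (hclip : ∀ t j v, 1 / ((T : ℝ) * K * M) ≤ pbar t j v ∧ pbar t j v ≤ 1 / (M : ℝ))
    (jstar : Fin K) {Lap : Fin T → Fin K → ℝ} (hLap : ∀ t j, |Lap t j| ≤ c')
    (ys : (t : Fin T) → Fin (N' t)) {w : ℕ → Fin K → ℝ} (hw0 : ∀ j, w 0 j = 1)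
    (hwrec : ∀ (t : Fin T) (j : Fin K), w (t.1 + 1) j = w t.1 j *
      Real.exp (-η * (-c * (Real.log (pbar t j (ys t)) + Lap t j + Real.log (M : ℝ) - c')))) :
    ∑ t, Real.log (pbar t jstar (ys t) / ∑ j, (w t.1 j / ∑ i, w t.1 i) * pbar t j (ys t)) ≤
      ∑ t, ∑ j, (w t.1 j / ∑ i, w t.1 i) * Lap t j +
        (1 / c * Real.sqrt (2 * T * Real.log K) - ∑ t, Lap t jstar) := by
  have hK' : (2 : ℝ) ≤ K := by exact_mod_cast hK
  have hT' : (1 : ℝ) ≤ T := by exact_mod_cast hT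
  have hT0 : (0 : ℝ) < T := by linarith
  have hlogK : 0 < Real.log K := Real.log_pos (by linarith)
  have hc' : 0 ≤ c' := (abs_nonneg _).trans (hLap ⟨0, hT⟩ ⟨0, by omega⟩)
  have hc0 : 0 < c := by
    rw [hc]
    exact one_div_pos.2 (by have := Real.log_pos (by nlinarith : (1 : ℝ) < K * T); linarith)
  have : Nonempty (Fin K) := ⟨⟨0, by omega⟩⟩
  have h := sum_log_div_mixture_le (hη ▸ Real.sqrt_pos.2 (by positivity)) hc0
    (fun t j => ((one_div_pos.2 (by positivity)).trans_le (hclip t j (ys t)).1)) Lap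
    (fun t j => -c * (Real.log (pbar t j (ys t)) + Lap t j + Real.log (M : ℝ) - c'))
    (fun _ => -c * (Real.log M - c')) (fun t j => by ring)
    (fun t j => neg_mul_log_add_mem_Icc hT0 (by linarith) (by exact_mod_cast hM)
      (hclip t j (ys t)) (hLap t j) hc) hw0 hwrec jstar
  rw [Fintype.card_fin, hη, log_div_add_mul_div_two_eq_sqrt hlogK hT0] at h
  rw [one_div_mul_eq_div]
  linarith

theorem pathMean_sum_kl_blockSum_le (hK : 2 ≤ K) (hM : 1 ≤ M) (hT : 1 ≤ T) {c' c η : ℝ}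
    (hc : c = 1 / (Real.log ((K : ℝ) * T) + 2 * c')) (hη : η = Real.sqrt (2 * Real.log K / T))
    (hF : ∀ j x, IsDist (F j x))
    (hScard : ∀ t y, (S t y).card = ⌈(M : ℝ) * ⨆ j, F j (x t) y⌉₊)
    (hSdisj : ∀ t (y y' : Fin M), y ≠ y' → Disjoint (S t y) (S t y'))
    (hScover : ∀ t (v : Fin (N' t)), ∃ y, v ∈ S t y)
    (hpbar : ∀ t j y v, v ∈ S t y →
      pbar t j v = (1 - 1 / (T : ℝ)) * F j (x t) y / (S t y).card + 1 / ((T : ℝ) * N' t))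
    (hclip : ∀ t j v, 1 / ((T : ℝ) * K * M) ≤ pbar t j v ∧ pbar t j v ≤ 1 / (M : ℝ))
    (jstar : Fin K) {Lap : Fin T → Fin K → ℝ} (hLap : ∀ t j, |Lap t j| ≤ c')
    {w : ((t : Fin T) → Fin (N' t)) → ℕ → Fin K → ℝ} (hw0 : ∀ ys j, w ys 0 j = 1)
    (hwrec : ∀ ys (t : Fin T) (j : Fin K), w ys (t.1 + 1) j = w ys t.1 j *
      Real.exp (-η * (-c * (Real.log (pbar t j (ys t)) + Lap t j + Real.log (M : ℝ) - c')))) :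
    pathMean (fun t => pbar t jstar) (fun ys => ∑ t, kl (F jstar (x t))
        (fun y => ∑ v ∈ S t y, ∑ j, (w ys t.1 j / ∑ i, w ys t.1 i) * pbar t j v)) ≤
      1 / c * Real.sqrt (2 * T * Real.log K) + 3 * Real.log ((K : ℝ) * T) +
        ∑ t, ∑ j, pathMean (fun t => pbar t jstar) (fun ys => w ys t.1 j / ∑ i, w ys t.1 i) *
          Lap t j - ∑ t, Lap t jstar := by
  set Q : (t : Fin T) → Fin (N' t) → ℝ := fun t => pbar t jstar
  set m : ((t : Fin T) → Fin (N' t)) → (t : Fin T) → Fin (N' t) → ℝ :=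
    fun ys t v => ∑ j, (w ys t.1 j / ∑ i, w ys t.1 i) * pbar t j v
  have hT0 : (0 : ℝ) < T := by exact_mod_cast hT
  have hTKM : (0 : ℝ) < T * K * M := by
    have : (0 : ℝ) < K := by exact_mod_cast (by omega : 0 < K)
    have : (0 : ℝ) < M := by exact_mod_cast hM
    positivity
  have hQ0 : ∀ t v, 0 ≤ Q t v := fun t v => (one_div_pos.2 hTKM).le.trans (hclip t jstar v).1
  have hQ1 : ∀ t, ∑ v, Q t v = 1 := fun t =>
    sum_pbar_eq_one hM hF hScard hSdisj hScover hpbar t jstar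
  have hpos ys := weights_pos (hw0 ys) (fun _ _ => Real.exp_pos _) (hwrec ys)
  have hZ ys (t : Fin T) : 0 < ∑ i, w ys t.1 i :=
    sum_pos (fun i _ => hpos ys _ t.2.le i) ⟨⟨0, by omega⟩, mem_univ _⟩
  have hstep ys t := kl_blockSum_mixture_le hK hM hT hF hScard hSdisj hScover hpbar hclip jstar t
    (fun j => div_nonneg (hpos ys _ t.2.le j).le (hZ ys t).le)
    (by rw [← sum_div, div_self (hZ ys t).ne'])
  have hpred : ∀ ys t u, m (Function.update ys t u) t = m ys t := fun ys t u => by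
    simp only [m, weights_update_eq (φ := fun t j v => Real.exp (-η * (-c *
      (Real.log (pbar t j v) + Lap t j + Real.log (M : ℝ) - c')))) hw0 hwrec ys t u t.1 le_rfl]
  calc pathMean Q (fun ys => ∑ t, kl (F jstar (x t)) (fun y => ∑ v ∈ S t y, m ys t v))
      ≤ pathMean Q (fun ys => ∑ t, kl (Q t) (m ys t) + 3 * Real.log ((K : ℝ) * T)) :=
        pathMean_mono hQ0 fun ys => (sum_le_sum fun t _ => hstep ys t).trans_eq (by
          rw [sum_add_distrib, sum_const, card_univ, Fintype.card_fin, nsmul_eq_mul,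
            mul_div_cancel₀ _ hT0.ne'])
    _ = pathMean Q (fun ys => ∑ t, Real.log (Q t (ys t) / m ys t (ys t))) +
          3 * Real.log ((K : ℝ) * T) := by
        rw [pathMean_add_const hQ1, pathMean_sum_kl_eq hQ1 m hpred]
    _ ≤ pathMean Q (fun ys => ∑ t, ∑ j, (w ys t.1 j / ∑ i, w ys t.1 i) * Lap t j +
          (1 / c * Real.sqrt (2 * T * Real.log K) - ∑ t, Lap t jstar)) +
          3 * Real.log ((K : ℝ) * T) :=
        add_le_add_left (pathMean_mono hQ0 fun ys => sum_log_div_mixture_le_of_clip hK hM hT hc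
          hη hclip jstar hLap ys (hw0 ys) (hwrec ys)) _
    _ = _ := by
        rw [pathMean_add_const hQ1]
        simp only [pathMean_sum, pathMean_mul_const]
        ring

end Algorithm

theorem algorithm1_conditional_risk_bound_general
    (X : Type*) (M K T : ℕ) (hK : 2 ≤ K) (hM : 1 ≤ M) (hT : Real.log K < T)
    (ε δ γ : ℝ) (hε : 0 < ε) (hγ : 0 < γ)
    (b c' c : ℝ)
    (hb : b = (2 * Real.sqrt (2 * K * Real.log (1 / δ)) + Real.sqrt (K * ε)) *
      Real.log ((K : ℝ) * T) / ε)
    (hc' : c' = b * (γ + Real.log K + Real.log T))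
    (hc : c = 1 / (Real.log ((K : ℝ) * T) + 2 * c'))
    (F : Fin K → X → Fin M → ℝ) (hF : ∀ j x, IsDist (F j x))
    (x : Fin T → X) (jstar : Fin K)
    (N' : Fin T → ℕ)
    (S : (t : Fin T) → Fin M → Finset (Fin (N' t)))
    (hScard : ∀ t y, (S t y).card = ⌈(M : ℝ) * ⨆ j, F j (x t) y⌉₊)
    (hSdisj : ∀ t (y y' : Fin M), y ≠ y' → Disjoint (S t y) (S t y'))
    (hScover : ∀ t (v : Fin (N' t)), ∃ y, v ∈ S t y)
    (pbar : (t : Fin T) → Fin K → Fin (N' t) → ℝ)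
    (hpbar : ∀ t j y v, v ∈ S t y →
      pbar t j v = (1 - 1 / (T : ℝ)) * F j (x t) y / (S t y).card +
        1 / ((T : ℝ) * N' t))
    (hclip : ∀ t j v, 1 / ((T : ℝ) * K * M) ≤ pbar t j v ∧ pbar t j v ≤ 1 / (M : ℝ))
    (η : ℝ) (hη : η = Real.sqrt (2 * Real.log K / T)) :
    -- (a) the noise is uniformly bounded by `c'` with probability at least `1 − e^{−γ}`
    (1 : ℝ≥0∞) - ENNReal.ofReal (Real.exp (-γ)) ≤
      (Measure.pi fun _ : Fin T × Fin K => laplaceMeasure b)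
        {L : Fin T × Fin K → ℝ | ∀ p, |L p| ≤ c'} ∧
    -- (b) conditionally on that event, the expected cumulative KL-risk bound holds
    ∀ (Lap : Fin T → Fin K → ℝ), (∀ t j, |Lap t j| ≤ c') →
      ∀ (w : ((t : Fin T) → Fin (N' t)) → ℕ → Fin K → ℝ),
        (∀ ys j, w ys 0 j = 1) →
        (∀ ys (t : Fin T) (j : Fin K),
          w ys (t.1 + 1) j = w ys t.1 j *
            Real.exp (-η * (-c * (Real.log (pbar t j (ys t)) + Lap t j +
              Real.log (M : ℝ) - c')))) →
        (∑ ys : (t : Fin T) → Fin (N' t),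
            (∏ t, pbar t jstar (ys t)) *
              (∑ t : Fin T, ∑ y : Fin M,
                F jstar (x t) y *
                  Real.log (F jstar (x t) y /
                    (∑ v ∈ S t y, ∑ j : Fin K,
                      (w ys t.1 j / ∑ i : Fin K, w ys t.1 i) * pbar t j v))))
          ≤ (1 / c) * Real.sqrt (2 * T * Real.log K) + 3 * Real.log ((K : ℝ) * T) +
            (∑ t : Fin T, ∑ j : Fin K,
              (∑ ys : (t : Fin T) → Fin (N' t),
                  (∏ t', pbar t' jstar (ys t')) *
                    (w ys t.1 j / ∑ i : Fin K, w ys t.1 i)) * Lap t j) -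
            ∑ t : Fin T, Lap t jstar := by
  have hlogK : 0 < Real.log K := Real.log_pos (by exact_mod_cast hK)
  have hT1 : 1 ≤ T := Nat.cast_pos.1 (hlogK.trans hT)
  have hb0 : 0 < b := by
    have hKT : 0 < Real.log ((K : ℝ) * T) :=
      Real.log_pos (by norm_cast; nlinarith)
    have hKε : 0 < Real.sqrt (K * ε) :=
      Real.sqrt_pos.2 (mul_pos (by exact_mod_cast (by omega : 0 < K)) hε)
    rw [hb]
    positivity
  refine ⟨?_, fun Lap hLap w hw0 hwrec => ?_⟩
  · rw [hc']
    exact laplace_noise_bounded hT1 (by omega) hb0 hγ.le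
  · exact pathMean_sum_kl_blockSum_le hK hM hT1 hc hη hF hScard hSdisj hScover hpbar hclip jstar
      hLap hw0 hwrec

/-- **Key risk bound for Algorithm 1 (locally privatized WMA), conditionally on bounded
Laplace noise.**  With Laplace scale `b = (2√(2K ln(1/δ)) + √(Kε))·log(KT)/ε`, threshold
`c' = b·(γ + log K + log T)` and normalization `c = 1/(log(KT) + 2c')`:
(a) the i.i.d. Laplace noises `Lap t j` all lie in `[−c', c']` with probability at least
`1 − e^{−γ}`, and (b) for any fixed noise values with `|Lap t j| ≤ c'`, the predictions
`p̂ t` of Algorithm 1 (weighted-majority over the clipped distributions `p̄ t j`, with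
privatized losses `Ỹ t j = −c·(log p̄ t j (Y' t) + Lap t j + log M − c')` and weights
`w (t+1) j = w t j · e^{−η Ỹ t j}`, `η = √(2 log K / T)`) satisfy
`E_{Y'^T}[∑_t KL(f j* (x t), p̂ t)] ≤ (1/c)·√(2T log K) + 3 log(KT)
  + ∑_{t,j} E_{Y'^T}[w̃ t j]·Lap t j − ∑_t Lap t j*`,
the expectation being the finite average over the trajectories `ys` of the clipped labels
`Y' t ∼ p̄ t j* `, with density `∏_t p̄ t j* (ys t)`. -/
theorem algorithm1_conditional_risk_bound
    (X : Type*) (M K T : ℕ) (hK : 2 ≤ K) (hM : 1 ≤ M) (hT : Real.log K < T)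
    (ε δ γ : ℝ) (hε : 0 < ε) (hδ : δ ∈ Set.Ioo (0 : ℝ) 1) (hγ : 0 < γ)
    (b c' c : ℝ)
    (hb : b = (2 * Real.sqrt (2 * K * Real.log (1 / δ)) + Real.sqrt (K * ε)) *
      Real.log ((K : ℝ) * T) / ε)
    (hc' : c' = b * (γ + Real.log K + Real.log T))
    (hc : c = 1 / (Real.log ((K : ℝ) * T) + 2 * c'))
    (F : Fin K → X → Fin M → ℝ) (hF : ∀ j x, IsDist (F j x))
    (x : Fin T → X) (jstar : Fin K)
    (N' : Fin T → ℕ)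
    (S : (t : Fin T) → Fin M → Finset (Fin (N' t)))
    (hScard : ∀ t y, (S t y).card = ⌈(M : ℝ) * ⨆ j, F j (x t) y⌉₊)
    (hSdisj : ∀ t (y y' : Fin M), y ≠ y' → Disjoint (S t y) (S t y'))
    (hScover : ∀ t (v : Fin (N' t)), ∃ y, v ∈ S t y)
    (pbar : (t : Fin T) → Fin K → Fin (N' t) → ℝ)
    (hpbar : ∀ t j y v, v ∈ S t y →
      pbar t j v = (1 - 1 / (T : ℝ)) * F j (x t) y / (S t y).card +
        1 / ((T : ℝ) * N' t))
    (hclip : ∀ t j v, 1 / ((T : ℝ) * K * M) ≤ pbar t j v ∧ pbar t j v ≤ 1 / (M : ℝ))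
    (η : ℝ) (hη : η = Real.sqrt (2 * Real.log K / T)) :
    -- (a) the noise is uniformly bounded by `c'` with probability at least `1 − e^{−γ}`
    (1 : ℝ≥0∞) - ENNReal.ofReal (Real.exp (-γ)) ≤
      (Measure.pi fun _ : Fin T × Fin K => laplaceMeasure b)
        {L : Fin T × Fin K → ℝ | ∀ p, |L p| ≤ c'} ∧
    -- (b) conditionally on that event, the expected cumulative KL-risk bound holds
    ∀ (Lap : Fin T → Fin K → ℝ), (∀ t j, |Lap t j| ≤ c') →
      ∀ (w : ((t : Fin T) → Fin (N' t)) → ℕ → Fin K → ℝ),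
        (∀ ys j, w ys 0 j = 1) →
        (∀ ys (t : Fin T) (j : Fin K),
          w ys (t.1 + 1) j = w ys t.1 j *
            Real.exp (-η * (-c * (Real.log (pbar t j (ys t)) + Lap t j +
              Real.log (M : ℝ) - c')))) →
        (∑ ys : (t : Fin T) → Fin (N' t),
            (∏ t, pbar t jstar (ys t)) *
              (∑ t : Fin T, ∑ y : Fin M,
                F jstar (x t) y *
                  Real.log (F jstar (x t) y /
                    (∑ v ∈ S t y, ∑ j : Fin K,
                      (w ys t.1 j / ∑ i : Fin K, w ys t.1 i) * pbar t j v))))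
          ≤ (1 / c) * Real.sqrt (2 * T * Real.log K) + 3 * Real.log ((K : ℝ) * T) +
            (∑ t : Fin T, ∑ j : Fin K,
              (∑ ys : (t : Fin T) → Fin (N' t),
                  (∏ t', pbar t' jstar (ys t')) *
                    (w ys t.1 j / ∑ i : Fin K, w ys t.1 i)) * Lap t j) -
            ∑ t : Fin T, Lap t jstar :=
  algorithm1_conditional_risk_bound_general X M K T hK hM hT ε δ γ hε hγ b c' c hb hc' hc F hF x
    jstar N' S hScard hSdisj hScover pbar hpbar hclip η hη
end

section
/- Let ε > 0, let N be a positive integer, and let q_1,...,q_N be nonnegative reals satisfying the likelihood-ratio (differential privacy) condition q_i ≤ e^ε·q_j for all i, j ∈ [N]. Then (1/N)·∑_{i=1}^N q_i² − ( (1/N)·∑_{i=1}^N q_i )² ≤ min{(e^ε − 1)², 1}·e^ε·(min_{i∈[N]} q_i)·(∑_{i=1}^N q_i) / N. -/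
open Finset

/-!
The empirical variance equals `(1/(2N²)) ∑_{i,j} (q_i - q_j)²`, so it suffices to bound each
pair. Write `E = e^ε` and `m = min_i q_i`; every `q_i` lies in `[0, E m]`. For `a ≤ b` in this
range, `b - a ≤ (E - 1) a` and `a² ≤ E m (a + b)`, giving `(a - b)² ≤ (E - 1)² E m (a + b)`;
on the other hand `(a - b)² ≤ a² + b² ≤ E m (a + b)` always.
-/

theorem Finset.sum_sum_sub_sq {ι R : Type*} [CommRing R] (s : Finset ι) (f : ι → R) :
    ∑ i ∈ s, ∑ j ∈ s, (f i - f j) ^ 2 = 2 * (#s * ∑ i ∈ s, f i ^ 2 - (∑ i ∈ s, f i) ^ 2) := by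
  simp only [sub_sq, sum_add_distrib, sum_sub_distrib, sum_const, nsmul_eq_mul, ← mul_sum,
    ← sum_mul]
  ring

theorem Finset.sum_sum_add {ι R : Type*} [CommSemiring R] (s : Finset ι) (f : ι → R) :
    ∑ i ∈ s, ∑ j ∈ s, (f i + f j) = 2 * #s * ∑ i ∈ s, f i := by
  simp only [sum_add_distrib, sum_const, nsmul_eq_mul, ← mul_sum]
  ring

theorem Finset.card_mul_sum_sq_sub_sq_sum_le {ι R : Type*} [CommRing R] [LinearOrder R]
    [IsStrictOrderedRing R] (s : Finset ι) (f : ι → R) (C : R)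
    (h : ∀ i ∈ s, ∀ j ∈ s, (f i - f j) ^ 2 ≤ C * (f i + f j)) :
    #s * ∑ i ∈ s, f i ^ 2 - (∑ i ∈ s, f i) ^ 2 ≤ C * #s * ∑ i ∈ s, f i := by
  refine le_of_mul_le_mul_left ?_ (two_pos : (0 : R) < 2)
  calc 2 * (#s * ∑ i ∈ s, f i ^ 2 - (∑ i ∈ s, f i) ^ 2)
      = ∑ i ∈ s, ∑ j ∈ s, (f i - f j) ^ 2 := (sum_sum_sub_sq s f).symm
    _ ≤ ∑ i ∈ s, ∑ j ∈ s, C * (f i + f j) :=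
      sum_le_sum fun i hi ↦ sum_le_sum fun j hj ↦ h i hi j hj
    _ = C * (2 * #s * ∑ i ∈ s, f i) := by simp only [← mul_sum, sum_sum_add]
    _ = 2 * (C * #s * ∑ i ∈ s, f i) := by ring

section

variable {R : Type*} [CommRing R] [LinearOrder R] [IsStrictOrderedRing R]

theorem sq_sub_le_mul_add {a b M : R} (ha : 0 ≤ a) (hb : 0 ≤ b) (haM : a ≤ M) (hbM : b ≤ M) :
    (a - b) ^ 2 ≤ M * (a + b) := by
  nlinarith [mul_nonneg ha hb]

theorem sq_sub_le_of_le_mul {E a b M : R} (ha : 0 ≤ a) (hb : 0 ≤ b)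
    (hab : a ≤ E * b) (hba : b ≤ E * a) (haM : a ≤ M) (hbM : b ≤ M) :
    (a - b) ^ 2 ≤ (E - 1) ^ 2 * M * (a + b) := by
  wlog hle : a ≤ b generalizing a b
  · simpa [sub_sq_comm, add_comm] using this hb ha hba hab hbM haM (le_of_not_ge hle)
  have hgap : (b - a) ^ 2 ≤ ((E - 1) * a) ^ 2 := pow_le_pow_left₀ (by linarith) (by linarith) 2
  have hsq : a ^ 2 ≤ M * (a + b) := by nlinarith
  calc (a - b) ^ 2 = (b - a) ^ 2 := sub_sq_comm a b
    _ ≤ (E - 1) ^ 2 * a ^ 2 := by rwa [mul_pow] at hgap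
    _ ≤ (E - 1) ^ 2 * (M * (a + b)) := mul_le_mul_of_nonneg_left hsq (sq_nonneg _)
    _ = (E - 1) ^ 2 * M * (a + b) := by ring

theorem sq_sub_le_min_mul {E a b M : R} (ha : 0 ≤ a) (hb : 0 ≤ b)
    (hab : a ≤ E * b) (hba : b ≤ E * a) (haM : a ≤ M) (hbM : b ≤ M) :
    (a - b) ^ 2 ≤ min ((E - 1) ^ 2) 1 * M * (a + b) := by
  rw [min_mul_of_nonneg _ _ (ha.trans haM), min_mul_of_nonneg _ _ (add_nonneg ha hb), one_mul]
  exact le_min (sq_sub_le_of_le_mul ha hb hab hba haM hbM) (sq_sub_le_mul_add ha hb haM hbM)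

end

theorem dp_variance_bound_general (ε : ℝ) (N : ℕ) (hN : 0 < N)
    (q : Fin N → ℝ) (hq : ∀ i, 0 ≤ q i)
    (hdp : ∀ i j, q i ≤ Real.exp ε * q j) :
    (1 / (N : ℝ)) * ∑ i, (q i) ^ 2 - ((1 / (N : ℝ)) * ∑ i, q i) ^ 2 ≤
      min ((Real.exp ε - 1) ^ 2) 1 * Real.exp ε *
        (Finset.univ.inf' ⟨⟨0, hN⟩, Finset.mem_univ _⟩ q) * (∑ i, q i) / N := by
  obtain ⟨k, -, hk⟩ := exists_mem_eq_inf' ⟨⟨0, hN⟩, mem_univ _⟩ q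
  rw [hk]
  set C := min ((Real.exp ε - 1) ^ 2) 1 * Real.exp ε * q k
  have hpair (i j : Fin N) : (q i - q j) ^ 2 ≤ C * (q i + q j) := by
    simpa only [C, mul_assoc] using
      sq_sub_le_min_mul (hq i) (hq j) (hdp i j) (hdp j i) (hdp i k) (hdp j k)
  have hcleared := card_mul_sum_sq_sub_sq_sum_le univ q C fun i _ j _ ↦ hpair i j
  rw [card_univ, Fintype.card_fin] at hcleared
  have hNpos : (0 : ℝ) < N := by exact_mod_cast hN
  calc (1 / (N : ℝ)) * ∑ i, q i ^ 2 - ((1 / (N : ℝ)) * ∑ i, q i) ^ 2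
      = (N * ∑ i, q i ^ 2 - (∑ i, q i) ^ 2) / N ^ 2 := by field_simp
    _ ≤ C * N * (∑ i, q i) / N ^ 2 := by gcongr
    _ = C * (∑ i, q i) / N := by field_simp

/-- **Variance bound for the output densities of a pure locally private channel.**
If the nonnegative reals `q 1, ..., q N` satisfy the likelihood-ratio condition
`q i ≤ e^ε · q j` for all `i, j` (as the output densities of an `(ε,0)`-differentially
private channel at a fixed output do), then their empirical variance is at most
`min{(e^ε − 1)², 1} · e^ε · (min_i q i) · (∑_i q i) / N`. -/
theorem dp_variance_bound (ε : ℝ) (hε : 0 < ε) (N : ℕ) (hN : 0 < N)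
    (q : Fin N → ℝ) (hq : ∀ i, 0 ≤ q i)
    (hdp : ∀ i j, q i ≤ Real.exp ε * q j) :
    (1 / (N : ℝ)) * ∑ i, (q i) ^ 2 - ((1 / (N : ℝ)) * ∑ i, q i) ^ 2 ≤
      min ((Real.exp ε - 1) ^ 2) 1 * Real.exp ε *
        (Finset.univ.inf' ⟨⟨0, hN⟩, Finset.mem_univ _⟩ q) * (∑ i, q i) / N :=
  dp_variance_bound_general ε N hN q hq hdp
end
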